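/- arXiv:1410.6520 — 10 statements merged into one kernel-verified Lean document; each statement's English description precedes it below -/
import Mathlib

section
/- Let p, q, u, v be distinct points in the plane with p, u, v not collinear, such that segment (p,q) intersects segment (u,v), and let f map these points into R^d. If ‖f(u)−f(v)‖ = ‖u−v‖, and both {p,u,v} and {q,u,v} are nonexpansive under f, then ‖f(p)−f(q)‖ ≤ ‖p−q‖. -/
lemma combo_norm_sq {E : Type*} [NormedAddCommGroup E] [InnerProductSpace ℝ E]
    (a b c : E) (s t : ℝ) (hst : s + t = 1) :
    ‖a - (s • b + t • c)‖ ^ 2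
      = s * ‖a - b‖ ^ 2 + t * ‖a - c‖ ^ 2 - s * t * ‖b - c‖ ^ 2 := by
  obtain rfl : s = 1 - t := by linarith
  have h : a - ((1 - t) • b + t • c) = (1 - t) • (a - b) + t • (a - c) := by
    simp [smul_sub, sub_smul]; abel
  have hbc : b - c = (a - c) - (a - b) := by abel
  rw [h, hbc, norm_add_sq_real, norm_sub_sq_real (a - c) (a - b),
    norm_smul, norm_smul, real_inner_smul_left, real_inner_smul_right,
    real_inner_comm (a - b) (a - c)]
  simp only [mul_pow, sq_abs, Real.norm_eq_abs]
  ring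

lemma combo_dist_le {E : Type*} [NormedAddCommGroup E] [InnerProductSpace ℝ E]
    {F : Type*} [NormedAddCommGroup F] [InnerProductSpace ℝ F]
    (a b c : E) (a' b' c' : F) (s t : ℝ) (hs : 0 ≤ s) (ht : 0 ≤ t) (hst : s + t = 1)
    (h1 : dist a' b' ≤ dist a b) (h2 : dist a' c' ≤ dist a c)
    (h3 : dist b' c' = dist b c) :
    dist a' (s • b' + t • c') ≤ dist a (s • b + t • c) := by
  have key : dist a' (s • b' + t • c') ^ 2 ≤ dist a (s • b + t • c) ^ 2 := by
    simp only [dist_eq_norm] at *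
    rw [combo_norm_sq a b c s t hst, combo_norm_sq a' b' c' s t hst, h3]
    have e1 : ‖a' - b'‖ ^ 2 ≤ ‖a - b‖ ^ 2 := by nlinarith [norm_nonneg (a' - b')]
    have e2 : ‖a' - c'‖ ^ 2 ≤ ‖a - c‖ ^ 2 := by nlinarith [norm_nonneg (a' - c')]
    nlinarith [mul_le_mul_of_nonneg_left e1 hs, mul_le_mul_of_nonneg_left e2 ht]
  nlinarith [dist_nonneg (x := a') (y := s • b' + t • c'),
    dist_nonneg (x := a) (y := s • b + t • c)]

/-- Lemma nonexpansive (b), first part: if segment (p,q) crosses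
segment (u,v), {u,v} is critical, and {p,u,v}, {q,u,v} are nonexpansive under f,
then {p,q} is nonexpansive under f. -/
theorem crossing_nonexpansive_b {d : ℕ}
    (p q u v : EuclideanSpace ℝ (Fin 2))
    (f : EuclideanSpace ℝ (Fin 2) → EuclideanSpace ℝ (Fin d))
    (hpq : p ≠ q) (hpu : p ≠ u) (hpv : p ≠ v) (hqu : q ≠ u) (hqv : q ≠ v) (huv : u ≠ v)
    (hncol : ¬ Collinear ℝ ({p, u, v} : Set (EuclideanSpace ℝ (Fin 2))))
    (hcross : (segment ℝ p q ∩ segment ℝ u v).Nonempty)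
    (huv' : dist (f u) (f v) = dist u v)
    (hpu' : dist (f p) (f u) ≤ dist p u)
    (hpv' : dist (f p) (f v) ≤ dist p v)
    (hqu' : dist (f q) (f u) ≤ dist q u)
    (hqv' : dist (f q) (f v) ≤ dist q v) :
    dist (f p) (f q) ≤ dist p q := by
  obtain ⟨x, hxpq, hxuv⟩ := hcross
  obtain ⟨s, t, hs, ht, hst, hx⟩ := hxuv
  set y : EuclideanSpace ℝ (Fin d) := s • f u + t • f v with hy
  have hp : dist (f p) y ≤ dist p x := by
    rw [← hx]
    exact combo_dist_le p u v (f p) (f u) (f v) s t hs ht hst hpu' hpv' huv'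
  have hq : dist (f q) y ≤ dist q x := by
    rw [← hx]
    exact combo_dist_le q u v (f q) (f u) (f v) s t hs ht hst hqu' hqv' huv'
  have hsum : dist p x + dist x q = dist p q := dist_add_dist_of_mem_segment hxpq
  calc dist (f p) (f q) ≤ dist (f p) y + dist y (f q) := dist_triangle _ _ _
    _ ≤ dist p x + dist x q := by rw [dist_comm y (f q)]; exact add_le_add hp (by rw [dist_comm x q]; exact hq)
    _ = dist p q := hsum
end

section
/- Let p, q, u, v be distinct points in the plane with p, u, v not collinear, segment (p,q) crossing segment (u,v), and f mapping these points into R^d. If ‖f(u)−f(v)‖ = ‖u−v‖, both {p,u,v} and {q,u,v} are nonexpansive under f, and additionally ‖f(p)−f(q)‖ = ‖p−q‖, then the full set {p,q,u,v} is critical under f (all six pairwise distances are preserved). -/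
set_option maxHeartbeats 4000000

open RealInnerProductSpace

private lemma key {E : Type*} [NormedAddCommGroup E] [InnerProductSpace ℝ E]
    (a b c d : E) (s t : ℝ) :
    ‖((1-s)•a + s•b) - ((1-t)•c + t•d)‖^2 =
      (1-s)*(1-t)*‖a-c‖^2 + (1-s)*t*‖a-d‖^2 + s*(1-t)*‖b-c‖^2 + s*t*‖b-d‖^2
      - s*(1-s)*‖a-b‖^2 - t*(1-t)*‖c-d‖^2 := by
  have h : ∀ x y : E, ‖x - y‖^2 = ⟪x,x⟫ - 2*⟪x,y⟫ + ⟪y,y⟫ := by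
    intro x y
    rw [← real_inner_self_eq_norm_sq]
    simp only [inner_sub_left, inner_sub_right]
    rw [real_inner_comm y x]
    ring
  rw [h, h, h, h, h, h, h]
  simp only [inner_add_left, inner_add_right, real_inner_smul_left, real_inner_smul_right]
  rw [real_inner_comm b a, real_inner_comm c a, real_inner_comm d a, real_inner_comm c b,
    real_inner_comm d b, real_inner_comm d c]
  ring

private lemma sqeq {x y : ℝ} (hx : 0 ≤ x) (hy : 0 ≤ y) (h : x^2 = y^2) : x = y := by
  nlinarith [sq_nonneg (x - y), sq_nonneg (x + y)]

/-- If `c` sits strictly between `a` and `b`, distances `a b` and `w c` are preserved,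
and distances `w a`, `w b` are nonexpanded, then they are preserved. -/
private lemma lemC {E F : Type*} [NormedAddCommGroup E] [InnerProductSpace ℝ E]
    [NormedAddCommGroup F] [InnerProductSpace ℝ F]
    (a b w : E) (A B W : F) (t : ℝ) (ht0 : 0 < t) (ht1 : t < 1)
    (hab : ‖A - B‖ = ‖a - b‖)
    (hwc : ‖W - ((1-t)•A + t•B)‖ = ‖w - ((1-t)•a + t•b)‖)
    (hwa : ‖W - A‖ ≤ ‖w - a‖) (hwb : ‖W - B‖ ≤ ‖w - b‖) :
    ‖W - A‖ = ‖w - a‖ ∧ ‖W - B‖ = ‖w - b‖ := by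
  have h1 : ((1:ℝ)-0)•w + (0:ℝ)•w = w := by simp
  have h2 : ((1:ℝ)-0)•W + (0:ℝ)•W = W := by simp
  have hd := key w w a b 0 t
  have hi := key W W A B 0 t
  rw [h1] at hd
  rw [h2] at hi
  have hab2 : ‖A-B‖^2 = ‖a-b‖^2 := by rw [hab]
  have hwc2 : ‖W - ((1-t)•A + t•B)‖^2 = ‖w - ((1-t)•a + t•b)‖^2 := by rw [hwc]
  have hwa2 : ‖W-A‖^2 ≤ ‖w-a‖^2 := pow_le_pow_left₀ (norm_nonneg _) hwa 2
  have hwb2 : ‖W-B‖^2 ≤ ‖w-b‖^2 := pow_le_pow_left₀ (norm_nonneg _) hwb 2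
  have hsum : (1-t)*(‖w-a‖^2 - ‖W-A‖^2) + t*(‖w-b‖^2 - ‖W-B‖^2) = 0 := by
    linear_combination hi - hd - hwc2 - (t*(1-t))*hab2
  have hXa : ‖w-a‖^2 - ‖W-A‖^2 = 0 := by
    have hle : (1-t)*(‖w-a‖^2 - ‖W-A‖^2) ≤ 0 := by
      linarith [hsum, mul_nonneg ht0.le (by linarith : (0:ℝ) ≤ ‖w-b‖^2 - ‖W-B‖^2)]
    rcases mul_nonpos_iff.mp hle with ⟨_, h⟩ | ⟨h, _⟩
    · linarith
    · linarith
  have hXb : ‖w-b‖^2 - ‖W-B‖^2 = 0 := by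
    have hle : t*(‖w-b‖^2 - ‖W-B‖^2) ≤ 0 := by
      linarith [hsum, mul_nonneg (by linarith : (0:ℝ) ≤ 1-t) (by linarith : (0:ℝ) ≤ ‖w-a‖^2 - ‖W-A‖^2)]
    rcases mul_nonpos_iff.mp hle with ⟨_, h⟩ | ⟨h, _⟩
    · linarith
    · linarith
  exact ⟨sqeq (norm_nonneg _) (norm_nonneg _) (by linarith),
    sqeq (norm_nonneg _) (norm_nonneg _) (by linarith)⟩

/-- Lemma nonexpansive (b), second part: under the hypotheses of
the crossing lemma, if additionally {p,q} is critical under f, then the full set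
{p,q,u,v} is critical under f. -/
theorem crossing_critical {d : ℕ}
    (p q u v : EuclideanSpace ℝ (Fin 2))
    (f : EuclideanSpace ℝ (Fin 2) → EuclideanSpace ℝ (Fin d))
    (hpq : p ≠ q) (hpu : p ≠ u) (hpv : p ≠ v) (hqu : q ≠ u) (hqv : q ≠ v) (huv : u ≠ v)
    (hncol : ¬ Collinear ℝ ({p, u, v} : Set (EuclideanSpace ℝ (Fin 2))))
    (hcross : (segment ℝ p q ∩ segment ℝ u v).Nonempty)
    (huv' : dist (f u) (f v) = dist u v)
    (hpu' : dist (f p) (f u) ≤ dist p u)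
    (hpv' : dist (f p) (f v) ≤ dist p v)
    (hqu' : dist (f q) (f u) ≤ dist q u)
    (hqv' : dist (f q) (f v) ≤ dist q v)
    (hpq' : dist (f p) (f q) = dist p q) :
    ∀ a ∈ ({p, q, u, v} : Set (EuclideanSpace ℝ (Fin 2))),
      ∀ b ∈ ({p, q, u, v} : Set (EuclideanSpace ℝ (Fin 2))),
        dist (f a) (f b) = dist a b := by
  simp only [dist_eq_norm] at huv' hpu' hpv' hqu' hqv' hpq'
  obtain ⟨x, hx1, hx2⟩ := hcross
  obtain ⟨a1, s, ha1, hs0, hab1, hxpq⟩ := hx1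
  obtain ⟨c1, t, hc1, ht0, hcd1, hxuv⟩ := hx2
  have hs1 : s ≤ 1 := by linarith
  have ht1 : t ≤ 1 := by linarith
  have hmain : (1-s)•p + s•q = (1-t)•u + t•v := by
    have h1 : a1 = 1 - s := by linarith
    have h2 : c1 = 1 - t := by linarith
    rw [← h1, ← h2, hxpq, hxuv]
  have hsne : s ≠ 0 := by
    intro h
    subst h
    have hp : p = AffineMap.lineMap u v t := by
      rw [AffineMap.lineMap_apply_module]
      simpa using hmain
    exact hncol (collinear_insert_of_mem_affineSpan_pair
      (by rw [hp]; exact AffineMap.lineMap_mem_affineSpan_pair t u v))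
  have hspos : 0 < s := lt_of_le_of_ne hs0 (Ne.symm hsne)
  -- squared inequalities
  have sqpu : ‖f p - f u‖^2 ≤ ‖p - u‖^2 := pow_le_pow_left₀ (norm_nonneg _) hpu' 2
  have sqpv : ‖f p - f v‖^2 ≤ ‖p - v‖^2 := pow_le_pow_left₀ (norm_nonneg _) hpv' 2
  have squ : ‖f q - f u‖^2 ≤ ‖q - u‖^2 := pow_le_pow_left₀ (norm_nonneg _) hqu' 2
  have sqv : ‖f q - f v‖^2 ≤ ‖q - v‖^2 := pow_le_pow_left₀ (norm_nonneg _) hqv' 2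
  have hN := key (f p) (f q) (f u) (f v) s t
  rw [hpq', huv'] at hN
  have hD : (0:ℝ) = (1-s)*(1-t)*‖p - u‖^2 + (1-s)*t*‖p - v‖^2 + s*(1-t)*‖q - u‖^2
      + s*t*‖q - v‖^2 - s*(1-s)*‖p - q‖^2 - t*(1-t)*‖u - v‖^2 := by
    rw [← key p q u v s t, hmain, sub_self, norm_zero]
    norm_num
  have hNn : 0 ≤ ‖((1-s)•f p + s•f q) - ((1-t)•f u + t•f v)‖^2 := sq_nonneg _
  have t11 : 0 ≤ (1-s)*(1-t)*(‖p-u‖^2 - ‖f p - f u‖^2) :=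
    mul_nonneg (mul_nonneg (by linarith) (by linarith)) (by linarith)
  have t12 : 0 ≤ (1-s)*t*(‖p-v‖^2 - ‖f p - f v‖^2) :=
    mul_nonneg (mul_nonneg (by linarith) (by linarith)) (by linarith)
  have t21 : 0 ≤ s*(1-t)*(‖q-u‖^2 - ‖f q - f u‖^2) :=
    mul_nonneg (mul_nonneg (by linarith) (by linarith)) (by linarith)
  have t22 : 0 ≤ s*t*(‖q-v‖^2 - ‖f q - f v‖^2) :=
    mul_nonneg (mul_nonneg (by linarith) (by linarith)) (by linarith)
  have e11 : (1-s)*(1-t)*(‖p-u‖^2 - ‖f p - f u‖^2) = 0 := by linarith [hN, hD, hNn, t11, t12, t21, t22]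
  have e12 : (1-s)*t*(‖p-v‖^2 - ‖f p - f v‖^2) = 0 := by linarith [hN, hD, hNn, t11, t12, t21, t22]
  have e21 : s*(1-t)*(‖q-u‖^2 - ‖f q - f u‖^2) = 0 := by linarith [hN, hD, hNn, t11, t12, t21, t22]
  have e22 : s*t*(‖q-v‖^2 - ‖f q - f v‖^2) = 0 := by linarith [hN, hD, hNn, t11, t12, t21, t22]
  have hN0 : ‖((1-s)•f p + s•f q) - ((1-t)•f u + t•f v)‖^2 = 0 := by linarith [hN, hD, t11, t12, t21, t22]
  have hX0 : (1-s)•f p + s•f q = (1-t)•f u + t•f v := by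
    have := norm_eq_zero.mp ((pow_eq_zero_iff two_ne_zero).mp hN0)
    exact sub_eq_zero.mp this
  -- main claim: the four cross distances
  have H : ‖f p - f u‖ = ‖p - u‖ ∧ ‖f p - f v‖ = ‖p - v‖ ∧
      ‖f q - f u‖ = ‖q - u‖ ∧ ‖f q - f v‖ = ‖q - v‖ := by
    by_cases hseq : s = 1
    · -- x = q lies on segment u v
      subst hseq
      have hmq : q = (1-t)•u + t•v := by simpa using hmain
      have hfq : f q = (1-t)•f u + t•f v := by simpa using hX0
      have ht0' : t ≠ 0 := by
        intro h; apply hqu; rw [h] at hmq; simpa using hmq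
      have ht1' : t ≠ 1 := by
        intro h; apply hqv; rw [h] at hmq; simpa using hmq
      have htpos : 0 < t := lt_of_le_of_ne ht0 (Ne.symm ht0')
      have htlt : t < 1 := lt_of_le_of_ne ht1 ht1'
      have hqu2 : ‖q-u‖^2 - ‖f q - f u‖^2 = 0 := by
        have hc : (0:ℝ) < 1*(1-t) := by nlinarith
        exact (mul_eq_zero.mp (by linarith [e21] : (1:ℝ)*(1-t)*(‖q-u‖^2 - ‖f q - f u‖^2) = 0)).resolve_left (ne_of_gt hc)
      have hqv2 : ‖q-v‖^2 - ‖f q - f v‖^2 = 0 := by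
        have hc : (0:ℝ) < 1*t := by nlinarith
        exact (mul_eq_zero.mp (by linarith [e22] : (1:ℝ)*t*(‖q-v‖^2 - ‖f q - f v‖^2) = 0)).resolve_left (ne_of_gt hc)
      have hC := lemC u v p (f u) (f v) (f p) t htpos htlt huv'
        (by rw [← hfq, ← hmq]; exact hpq') hpu' hpv'
      exact ⟨hC.1, hC.2, sqeq (norm_nonneg _) (norm_nonneg _) (by linarith),
        sqeq (norm_nonneg _) (norm_nonneg _) (by linarith)⟩
    · have hslt : s < 1 := lt_of_le_of_ne hs1 hseq
      by_cases hteq : t = 0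
      · -- x = u lies on segment p q
        subst hteq
        have hmu : u = (1-s)•p + s•q := by
          have := hmain; simp at this; exact this.symm
        have hfu : f u = (1-s)•f p + s•f q := by
          have := hX0; simp at this; exact this.symm
        have hpu2 : ‖p-u‖^2 - ‖f p - f u‖^2 = 0 := by
          have hc : (0:ℝ) < (1-s)*(1-0) := by nlinarith
          exact (mul_eq_zero.mp e11).resolve_left (ne_of_gt hc)
        have hqu2 : ‖q-u‖^2 - ‖f q - f u‖^2 = 0 := by
          have hc : (0:ℝ) < s*(1-0) := by nlinarith
          exact (mul_eq_zero.mp e21).resolve_left (ne_of_gt hc)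
        have hC := lemC p q v (f p) (f q) (f v) s hspos hslt hpq'
          (by rw [← hfu, ← hmu, norm_sub_rev (f v), norm_sub_rev v]; exact huv')
          (by rw [norm_sub_rev (f v), norm_sub_rev v]; exact hpv')
          (by rw [norm_sub_rev (f v), norm_sub_rev v]; exact hqv')
        refine ⟨sqeq (norm_nonneg _) (norm_nonneg _) (by linarith), ?_,
          sqeq (norm_nonneg _) (norm_nonneg _) (by linarith), ?_⟩
        · rw [norm_sub_rev (f p), norm_sub_rev p]; exact hC.1
        · rw [norm_sub_rev (f q), norm_sub_rev q]; exact hC.2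
      · by_cases hteq1 : t = 1
        · -- x = v lies on segment p q
          subst hteq1
          have hmv : v = (1-s)•p + s•q := by
            have := hmain; simp at this; exact this.symm
          have hfv : f v = (1-s)•f p + s•f q := by
            have := hX0; simp at this; exact this.symm
          have hpv2 : ‖p-v‖^2 - ‖f p - f v‖^2 = 0 := by
            have hc : (0:ℝ) < (1-s)*1 := by nlinarith
            exact (mul_eq_zero.mp e12).resolve_left (ne_of_gt hc)
          have hqv2 : ‖q-v‖^2 - ‖f q - f v‖^2 = 0 := by
            have hc : (0:ℝ) < s*1 := by nlinarith
            exact (mul_eq_zero.mp e22).resolve_left (ne_of_gt hc)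
          have hC := lemC p q u (f p) (f q) (f u) s hspos hslt hpq'
            (by rw [← hfv, ← hmv]; exact huv')
            (by rw [norm_sub_rev (f u), norm_sub_rev u]; exact hpu')
            (by rw [norm_sub_rev (f u), norm_sub_rev u]; exact hqu')
          refine ⟨?_, sqeq (norm_nonneg _) (norm_nonneg _) (by linarith), ?_,
            sqeq (norm_nonneg _) (norm_nonneg _) (by linarith)⟩
          · rw [norm_sub_rev (f p), norm_sub_rev p]; exact hC.1
          · rw [norm_sub_rev (f q), norm_sub_rev q]; exact hC.2
        · -- interior case: 0 < s < 1, 0 < t < 1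
          have htpos : 0 < t := lt_of_le_of_ne ht0 (Ne.symm hteq)
          have htlt : t < 1 := lt_of_le_of_ne ht1 hteq1
          have hpu2 : ‖p-u‖^2 - ‖f p - f u‖^2 = 0 :=
            (mul_eq_zero.mp e11).resolve_left (ne_of_gt (by nlinarith))
          have hpv2 : ‖p-v‖^2 - ‖f p - f v‖^2 = 0 :=
            (mul_eq_zero.mp e12).resolve_left (ne_of_gt (by nlinarith))
          have hqu2 : ‖q-u‖^2 - ‖f q - f u‖^2 = 0 :=
            (mul_eq_zero.mp e21).resolve_left (ne_of_gt (by nlinarith))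
          have hqv2 : ‖q-v‖^2 - ‖f q - f v‖^2 = 0 :=
            (mul_eq_zero.mp e22).resolve_left (ne_of_gt (by nlinarith))
          exact ⟨sqeq (norm_nonneg _) (norm_nonneg _) (by linarith),
            sqeq (norm_nonneg _) (norm_nonneg _) (by linarith),
            sqeq (norm_nonneg _) (norm_nonneg _) (by linarith),
            sqeq (norm_nonneg _) (norm_nonneg _) (by linarith)⟩
  obtain ⟨Hpu, Hpv, Hqu, Hqv⟩ := H
  have Hup : ‖f u - f p‖ = ‖u - p‖ := by rw [norm_sub_rev, norm_sub_rev u p]; exact Hpu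
  have Hvp : ‖f v - f p‖ = ‖v - p‖ := by rw [norm_sub_rev, norm_sub_rev v p]; exact Hpv
  have Huq : ‖f u - f q‖ = ‖u - q‖ := by rw [norm_sub_rev, norm_sub_rev u q]; exact Hqu
  have Hvq : ‖f v - f q‖ = ‖v - q‖ := by rw [norm_sub_rev, norm_sub_rev v q]; exact Hqv
  have Hqp : ‖f q - f p‖ = ‖q - p‖ := by rw [norm_sub_rev, norm_sub_rev q p]; exact hpq'
  have Hvu : ‖f v - f u‖ = ‖v - u‖ := by rw [norm_sub_rev, norm_sub_rev v u]; exact huv'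
  intro a ha b hb
  simp only [Set.mem_insert_iff, Set.mem_singleton_iff] at ha hb
  rcases ha with rfl | rfl | rfl | rfl <;> rcases hb with rfl | rfl | rfl | rfl <;>
    simp only [dist_eq_norm] <;> first | simp | assumption
end

section
/- Let x be a point on segment (u,v), written x = u + t(v−u) with t ∈ [0,1], and let p be another point. Let f map p, u, v into R^d with ‖f(u)−f(v)‖ = ‖u−v‖ and {p,u,v} nonexpansive under f. Define x_f = f(u) + t(f(v)−f(u)). Then ‖x_f − f(p)‖ ≤ ‖x − p‖. -/
lemma key_identity {E : Type*} [NormedAddCommGroup E] [InnerProductSpace ℝ E]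
    (a b : E) (t : ℝ) :
    ‖a + t • (b - a)‖ ^ 2
      = (1 - t) * ‖a‖ ^ 2 + t * ‖b‖ ^ 2 - t * (1 - t) * ‖b - a‖ ^ 2 := by
  rw [← real_inner_self_eq_norm_sq, ← real_inner_self_eq_norm_sq a,
    ← real_inner_self_eq_norm_sq b, ← real_inner_self_eq_norm_sq (b - a)]
  simp only [inner_add_left, inner_add_right, inner_sub_left, inner_sub_right,
    real_inner_smul_left, real_inner_smul_right]
  have := real_inner_comm a b
  ring_nf

/-- if x = u + t(v−u) with t ∈ [0,1], {u,v} is critical under f and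
{p,u,v} is nonexpansive under f, then the affine image x_f = f(u) + t(f(v)−f(u))
satisfies ‖x_f − f(p)‖ ≤ ‖x − p‖. -/
theorem point_on_segment_nonexpansive {d : ℕ}
    (p u v : EuclideanSpace ℝ (Fin 2))
    (f : EuclideanSpace ℝ (Fin 2) → EuclideanSpace ℝ (Fin d))
    (t : ℝ) (ht : t ∈ Set.Icc (0 : ℝ) 1)
    (huv' : dist (f u) (f v) = dist u v)
    (hpu' : dist (f p) (f u) ≤ dist p u)
    (hpv' : dist (f p) (f v) ≤ dist p v) :
    dist (f u + t • (f v - f u)) (f p) ≤ dist (u + t • (v - u)) p := by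
  obtain ⟨ht0, ht1⟩ := ht
  set a := f u - f p
  set b := f v - f p
  set A := u - p
  set B := v - p
  have e1 : f u + t • (f v - f u) - f p = a + t • (b - a) := by
    simp only [a, b]; abel
  have e2 : u + t • (v - u) - p = A + t • (B - A) := by
    simp only [A, B]; abel
  rw [dist_eq_norm, dist_eq_norm, e1, e2]
  have hba : ‖b - a‖ = ‖B - A‖ := by
    have : b - a = f v - f u := by simp only [a, b]; abel
    have h2 : B - A = v - u := by simp only [A, B]; abel
    rw [this, h2, ← dist_eq_norm, ← dist_eq_norm, dist_comm (f v), dist_comm v, huv']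
  have ha : ‖a‖ ≤ ‖A‖ := by
    simpa [a, A, ← dist_eq_norm, dist_comm (f u), dist_comm u] using hpu'
  have hb : ‖b‖ ≤ ‖B‖ := by
    simpa [b, B, ← dist_eq_norm, dist_comm (f v), dist_comm v] using hpv'
  have hsq : ‖a + t • (b - a)‖ ^ 2 ≤ ‖A + t • (B - A)‖ ^ 2 := by
    rw [key_identity, key_identity, hba]
    have ha2 : ‖a‖ ^ 2 ≤ ‖A‖ ^ 2 := by nlinarith [mul_le_mul ha ha (norm_nonneg a) (norm_nonneg A)]
    have hb2 : ‖b‖ ^ 2 ≤ ‖B‖ ^ 2 := by nlinarith [mul_le_mul hb hb (norm_nonneg b) (norm_nonneg B)]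
    have h3 : 0 ≤ (1 - t) * (‖A‖ ^ 2 - ‖a‖ ^ 2) :=
      mul_nonneg (by linarith) (by linarith)
    have h4 : 0 ≤ t * (‖B‖ ^ 2 - ‖b‖ ^ 2) := mul_nonneg ht0 (by linarith)
    nlinarith
  have h1 := norm_nonneg (a + t • (b - a))
  have h2 := norm_nonneg (A + t • (B - A))
  nlinarith [hsq, h1, h2, sq_nonneg (‖a + t • (b - a)‖ - ‖A + t • (B - A)‖)]
end

section
/- Let P be a polygon (compact region bounded by a simple closed polygonal curve) with vertex set V(P), and let f : ∂P → R^d be a boundary mapping that maps each edge of P affinely onto a congruent line segment (i.e., f restricted to each edge is an isometry onto a segment). If V(P) is nonexpansive under f, then the whole boundary ∂P is nonexpansive under f: for all a, b ∈ ∂P, ‖f(a)−f(b)‖ ≤ ‖a−b‖. -/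
/-!
By Stewart's theorem, the squared distance from a fixed point `p` to the point `x + t • (y - x)`
of a segment is `(1 - t) |xp|² + t |yp|² - t (1 - t) |xy|²`. For `t ∈ [0, 1]` this is monotone in
`|xp|` and `|yp|`, so a map that is affine and length-preserving on the segment, and does not
increase the distances from its endpoints to `p`, does not increase the distance from any of its
points to `p`. Applied once with `p` a vertex and once with `p` a boundary point, this extends
nonexpansiveness from the vertices to the whole boundary.
-/

open Set

variable {E F : Type*} [NormedAddCommGroup E] [InnerProductSpace ℝ E]
  [NormedAddCommGroup F] [InnerProductSpace ℝ F]

theorem dist_add_smul_sub_sq (x y p : E) (t : ℝ) :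
    dist (x + t • (y - x)) p ^ 2 =
      (1 - t) * dist x p ^ 2 + t * dist y p ^ 2 - t * (1 - t) * dist x y ^ 2 := by
  have hx : x + t • (y - x) - p = (x - p) + t • ((y - p) - (x - p)) := by module
  have hxy : x - y = (x - p) - (y - p) := by abel
  simp only [dist_eq_norm, hx, hxy, ← real_inner_self_eq_norm_sq, inner_add_left,
    inner_add_right, inner_sub_left, inner_sub_right, real_inner_smul_left,
    real_inner_smul_right]
  ring

theorem dist_add_smul_sub_le {x y p : E} {x' y' p' : F} (hxy : dist x' y' = dist x y)
    (hx : dist x' p' ≤ dist x p) (hy : dist y' p' ≤ dist y p) {t : ℝ} (ht : t ∈ Icc (0 : ℝ) 1) :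
    dist (x' + t • (y' - x')) p' ≤ dist (x + t • (y - x)) p := by
  have h1t : 0 ≤ 1 - t := sub_nonneg.2 ht.2
  rw [← pow_le_pow_iff_left₀ dist_nonneg dist_nonneg two_ne_zero, dist_add_smul_sub_sq,
    dist_add_smul_sub_sq, hxy]
  gcongr
  exact ht.1

theorem dist_apply_le_of_mem_segment {f : E → F} {x y p : E} {q : F}
    (haff : ∀ t ∈ Icc (0 : ℝ) 1, f (x + t • (y - x)) = f x + t • (f y - f x))
    (hxy : dist (f x) (f y) = dist x y) (hx : dist (f x) q ≤ dist x p)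
    (hy : dist (f y) q ≤ dist y p) {z : E} (hz : z ∈ segment ℝ x y) :
    dist (f z) q ≤ dist z p := by
  rw [segment_eq_image'] at hz
  obtain ⟨t, ht, rfl⟩ := hz
  rw [haff t ht]
  exact dist_add_smul_sub_le hxy hx hy ht

theorem boundary_nonexpansive_of_vertices_general {d n : ℕ}
    (V : ZMod n → EuclideanSpace ℝ (Fin 2))
    (f : EuclideanSpace ℝ (Fin 2) → EuclideanSpace ℝ (Fin d))
    -- each edge maps affinely
    (haff : ∀ i : ZMod n, ∀ t ∈ Set.Icc (0 : ℝ) 1,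
        f (V i + t • (V (i + 1) - V i)) = f (V i) + t • (f (V (i + 1)) - f (V i)))
    -- each edge maps onto a congruent segment (isometrically)
    (hcongr : ∀ i : ZMod n, dist (f (V i)) (f (V (i + 1))) = dist (V i) (V (i + 1)))
    -- the vertex set is nonexpansive under f
    (hvert : ∀ i j : ZMod n, dist (f (V i)) (f (V j)) ≤ dist (V i) (V j)) :
    ∀ a ∈ ⋃ i : ZMod n, segment ℝ (V i) (V (i + 1)),
      ∀ b ∈ ⋃ i : ZMod n, segment ℝ (V i) (V (i + 1)),
        dist (f a) (f b) ≤ dist a b := by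
  intro a ha b hb
  obtain ⟨i, ha⟩ := mem_iUnion.1 ha
  obtain ⟨j, hb⟩ := mem_iUnion.1 hb
  have vertex_to_a (k : ZMod n) : dist (f (V k)) (f a) ≤ dist (V k) a := by
    rw [dist_comm, dist_comm (V k)]
    exact dist_apply_le_of_mem_segment (haff i) (hcongr i) (hvert i k) (hvert (i + 1) k) ha
  rw [dist_comm, dist_comm a]
  exact dist_apply_le_of_mem_segment (haff j) (hcongr j) (vertex_to_a j) (vertex_to_a (j + 1)) hb

/-- Lemma valid, sufficiency: if the vertices of a closed polygonal
boundary are nonexpansive under f and f maps each edge affinely-isometrically onto a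
congruent segment, then the whole boundary is nonexpansive under f. -/
theorem boundary_nonexpansive_of_vertices {d n : ℕ} (hn : 3 ≤ n)
    (V : ZMod n → EuclideanSpace ℝ (Fin 2)) (hinj : Function.Injective V)
    (f : EuclideanSpace ℝ (Fin 2) → EuclideanSpace ℝ (Fin d))
    -- each edge maps affinely
    (haff : ∀ i : ZMod n, ∀ t ∈ Set.Icc (0 : ℝ) 1,
        f (V i + t • (V (i + 1) - V i)) = f (V i) + t • (f (V (i + 1)) - f (V i)))
    -- each edge maps onto a congruent segment (isometrically)
    (hcongr : ∀ i : ZMod n, dist (f (V i)) (f (V (i + 1))) = dist (V i) (V (i + 1)))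
    -- the vertex set is nonexpansive under f
    (hvert : ∀ i j : ZMod n, dist (f (V i)) (f (V j)) ≤ dist (V i) (V j)) :
    ∀ a ∈ ⋃ i : ZMod n, segment ℝ (V i) (V (i + 1)),
      ∀ b ∈ ⋃ i : ZMod n, segment ℝ (V i) (V (i + 1)),
        dist (f a) (f b) ≤ dist a b :=
  boundary_nonexpansive_of_vertices_general V f haff hcongr hvert
end

section
/- Let v be a vertex of a polygon P with adjacent vertices u and w, let θ = ∠uvw ∈ (0, 2π) be the interior angle at v, and let φ = ∠f(u)f(v)f(w) where f preserves ‖u−v‖ and ‖w−v‖ but is contractive on {u,w}: ‖f(u)−f(w)‖ < ‖u−w‖ (hence φ < θ). For a point p visible from v with β = ∠pvu ∈ [0,θ], there exists q ∈ R^2 with ‖q−f(i)‖ = ‖p−i‖ for i ∈ {u,v,w} if and only if β ∈ {(θ−φ)/2, (θ+φ)/2}. -/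
open EuclideanGeometry Real

noncomputable section

lemma pt_angle (x y z : EuclideanSpace ℝ (Fin 2)) :
    ∠ x y z = InnerProductGeometry.angle (x - y) (z - y) := rfl

/-- SSS: with two pairs of sides equal, third sides are equal iff included angles are equal. -/
lemma sss_dist_iff_angle (a b c a' b' c' : EuclideanSpace ℝ (Fin 2))
    (hab : dist a' b' = dist a b) (hcb : dist c' b' = dist c b)
    (ha : a ≠ b) (hc : c ≠ b) :
    dist a' c' = dist a c ↔ ∠ a' b' c' = ∠ a b c := by
  have h1 : (0:ℝ) < dist a b := dist_pos.2 ha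
  have h2 : (0:ℝ) < dist c b := dist_pos.2 hc
  have L := EuclideanGeometry.law_cos a b c
  have L' := EuclideanGeometry.law_cos a' b' c'
  rw [hab, hcb] at L'
  constructor
  · intro h
    have hsq : dist a' c' * dist a' c' = dist a c * dist a c := by rw [h]
    have hcc : Real.cos (∠ a' b' c') = Real.cos (∠ a b c) :=
      mul_left_cancel₀ (by positivity : (2 * dist a b * dist c b : ℝ) ≠ 0) (by linarith)
    exact Real.injOn_cos
      ⟨EuclideanGeometry.angle_nonneg _ _ _, EuclideanGeometry.angle_le_pi _ _ _⟩
      ⟨EuclideanGeometry.angle_nonneg _ _ _, EuclideanGeometry.angle_le_pi _ _ _⟩ hcc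
  · intro h
    have hsq : dist a' c' ^ 2 = dist a c ^ 2 := by rw [pow_two, pow_two, L, L', h]
    calc dist a' c' = √(dist a' c' ^ 2) := (Real.sqrt_sq dist_nonneg).symm
      _ = √(dist a c ^ 2) := by rw [hsq]
      _ = dist a c := Real.sqrt_sq dist_nonneg

lemma abs_toReal_coe {ψ : ℝ} (h1 : -π ≤ ψ) (h2 : ψ ≤ π) :
    |((ψ : ℝ) : Real.Angle).toReal| = |ψ| := by
  rcases le_or_gt 0 ψ with h | h
  · rw [abs_of_nonneg h]
    exact Real.Angle.abs_toReal_coe_eq_self_iff.2 ⟨h, h2⟩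
  · rw [abs_of_neg h]
    have hψ : ((ψ : ℝ) : Real.Angle) = ((-(-ψ) : ℝ) : Real.Angle) := by norm_num
    rw [hψ]
    exact Real.Angle.abs_toReal_neg_coe_eq_self_iff.2 ⟨by linarith, by linarith⟩

/-- Lemma bend, d = 2: with θ = ∠uvw, φ = ∠f(u)f(v)f(w), f preserving
the distances to v but contractive on {u,w}, a point p in the sector at v with
β = ∠pvu admits a bend point image q ∈ ℝ² iff β ∈ {(θ−φ)/2, (θ+φ)/2}. -/
theorem bend_points_dim2
    (u v w p : EuclideanSpace ℝ (Fin 2))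
    (fu fv fw : EuclideanSpace ℝ (Fin 2))
    (huv : u ≠ v) (hwv : w ≠ v) (hpv : p ≠ v)
    (h1 : dist fu fv = dist u v) (h2 : dist fw fv = dist w v)
    (hcontr : dist fu fw < dist u w)
    -- p lies in the sector at v between the rays vu and vw
    (hsector : ∠ p v u + ∠ p v w = ∠ u v w) :
    (∃ q : EuclideanSpace ℝ (Fin 2),
        dist q fu = dist p u ∧ dist q fv = dist p v ∧ dist q fw = dist p w)
      ↔ (∠ p v u = (∠ u v w - ∠ fu fv fw) / 2 ∨ ∠ p v u = (∠ u v w + ∠ fu fv fw) / 2) := by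
  haveI : Fact (Module.finrank ℝ (EuclideanSpace ℝ (Fin 2)) = 2) := ⟨finrank_euclideanSpace_fin⟩
  set ori : Orientation ℝ (EuclideanSpace ℝ (Fin 2)) (Fin 2) :=
    (EuclideanSpace.basisFun (Fin 2) ℝ).toBasis.orientation with hori
  have hπ := Real.pi_pos
  have hduv : (0:ℝ) < dist u v := dist_pos.2 huv
  have hdwv : (0:ℝ) < dist w v := dist_pos.2 hwv
  have hdpv : (0:ℝ) < dist p v := dist_pos.2 hpv
  have hfufv : fu ≠ fv := by intro h; rw [h, dist_self] at h1; exact hduv.ne h1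
  have hfwfv : fw ≠ fv := by intro h; rw [h, dist_self] at h2; exact hdwv.ne h2
  have hne1 : fu - fv ≠ 0 := sub_ne_zero.2 hfufv
  have hne2 : fw - fv ≠ 0 := sub_ne_zero.2 hfwfv
  set β := ∠ p v u with hβdef
  set γ := ∠ p v w with hγdef
  set θ := ∠ u v w with hθdef
  set φ := ∠ fu fv fw with hφdef
  have hβ0 : 0 ≤ β := EuclideanGeometry.angle_nonneg _ _ _
  have hγ0 : 0 ≤ γ := EuclideanGeometry.angle_nonneg _ _ _
  have hθ0 : 0 ≤ θ := EuclideanGeometry.angle_nonneg _ _ _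
  have hφ0 : 0 ≤ φ := EuclideanGeometry.angle_nonneg _ _ _
  have hβπ : β ≤ π := EuclideanGeometry.angle_le_pi _ _ _
  have hγπ : γ ≤ π := EuclideanGeometry.angle_le_pi _ _ _
  have hθπ : θ ≤ π := EuclideanGeometry.angle_le_pi _ _ _
  have hφπ : φ ≤ π := EuclideanGeometry.angle_le_pi _ _ _
  -- φ < θ, from strict contraction
  have hφθ : φ < θ := by
    have L := EuclideanGeometry.law_cos u v w
    have L' := EuclideanGeometry.law_cos fu fv fw
    rw [h1, h2] at L'
    have hsq : dist fu fw * dist fu fw < dist u w * dist u w :=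
      mul_self_lt_mul_self dist_nonneg hcontr
    have h2d : (0:ℝ) < 2 * dist u v * dist w v := by positivity
    have hmul : 2 * dist u v * dist w v * Real.cos θ
        < 2 * dist u v * dist w v * Real.cos φ := by linarith
    have hcos : Real.cos θ < Real.cos φ := (mul_lt_mul_iff_right₀ h2d).1 hmul
    by_contra hle
    push_neg at hle
    rcases eq_or_lt_of_le hle with h | h
    · rw [h] at hcos; exact lt_irrefl _ hcos
    · exact absurd (Real.strictAntiOn_cos ⟨hθ0, hθπ⟩ ⟨hφ0, hφπ⟩ h) (not_lt.2 hcos.le)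
  constructor
  · rintro ⟨q, hq1, hq2, hq3⟩
    have hqfv : q ≠ fv := by intro h; rw [h, dist_self] at hq2; exact hdpv.ne hq2
    have hney : q - fv ≠ 0 := sub_ne_zero.2 hqfv
    have hang1 : ∠ q fv fu = β := (sss_dist_iff_angle p v u q fv fu hq2 h1 hpv huv).1 hq1
    have hang2 : ∠ q fv fw = γ := (sss_dist_iff_angle p v w q fv fw hq2 h2 hpv hwv).1 hq3
    set A := (ori.oangle (fu - fv) (q - fv)).toReal with hA
    set B := (ori.oangle (q - fv) (fw - fv)).toReal with hB
    set C := (ori.oangle (fu - fv) (fw - fv)).toReal with hC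
    have hAβ : |A| = β := by
      rw [hA, ← ori.angle_eq_abs_oangle_toReal hne1 hney, InnerProductGeometry.angle_comm,
        ← pt_angle q fv fu]
      exact hang1
    have hBγ : |B| = γ := by
      rw [hB, ← ori.angle_eq_abs_oangle_toReal hney hne2, ← pt_angle q fv fw]
      exact hang2
    have hCφ : |C| = φ := by
      rw [hC, ← ori.angle_eq_abs_oangle_toReal hne1 hne2, ← pt_angle fu fv fw]
    have hadd := ori.oangle_add hne1 hney hne2
    have hsum : ((A + B : ℝ) : Real.Angle) = ((C : ℝ) : Real.Angle) := by
      rw [Real.Angle.coe_add, hA, hB, hC, Real.Angle.coe_toReal, Real.Angle.coe_toReal,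
        Real.Angle.coe_toReal]
      exact hadd
    obtain ⟨k, hk⟩ := Real.Angle.angle_eq_iff_two_pi_dvd_sub.1 hsum
    have habsA := abs_le.1 hAβ.le
    have habsB := abs_le.1 hBγ.le
    have habsC := abs_le.1 hCφ.le
    have hk0 : k = 0 := by
      have h2π : (0:ℝ) < 2 * π := by linarith
      have hub : 2 * π * (k : ℝ) < 2 * π * 1 := by
        rw [← hk]; linarith [habsA.1, habsA.2, habsB.1, habsB.2, habsC.1, habsC.2]
      have hlb : 2 * π * (-1 : ℝ) < 2 * π * (k : ℝ) := by
        rw [← hk]; linarith [habsA.1, habsA.2, habsB.1, habsB.2, habsC.1, habsC.2]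
      have hk1 : (k : ℝ) < 1 := (mul_lt_mul_iff_right₀ h2π).1 hub
      have hk2 : (-1 : ℝ) < (k : ℝ) := (mul_lt_mul_iff_right₀ h2π).1 hlb
      have : (-1 : ℤ) < k ∧ k < 1 := ⟨by exact_mod_cast hk2, by exact_mod_cast hk1⟩
      omega
    rw [hk0] at hk
    push_cast at hk
    have hABC : A + B = C := by linarith
    rcases (abs_eq hβ0).1 hAβ with hA' | hA' <;>
      rcases (abs_eq hγ0).1 hBγ with hB' | hB' <;>
        rcases (abs_eq hφ0).1 hCφ with hC' | hC' <;>
          first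
            | (left; linarith)
            | (right; linarith)
  · intro hcase
    set c := (ori.oangle (fu - fv) (fw - fv)).toReal with hc
    have hCabs : |c| = φ := by
      rw [hc, ← ori.angle_eq_abs_oangle_toReal hne1 hne2, ← pt_angle fu fv fw]
    obtain ⟨ψ, hψβ, hψγ⟩ : ∃ ψ : ℝ, |ψ| = β ∧ |c - ψ| = γ := by
      rcases abs_cases c with ⟨hc1, hc2⟩ | ⟨hc1, hc2⟩
      · -- c = φ
        have hcc : c = φ := by rw [← hc1, hCabs]
        rcases hcase with hβ | hβ
        · refine ⟨-β, by rw [abs_neg, abs_of_nonneg hβ0], ?_⟩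
          have heq : c - -β = γ := by linarith
          rw [heq, abs_of_nonneg hγ0]
        · refine ⟨β, abs_of_nonneg hβ0, ?_⟩
          have heq : c - β = -γ := by linarith
          rw [heq, abs_neg, abs_of_nonneg hγ0]
      · -- c = -φ
        have hcc : c = -φ := by rw [← hCabs, hc1, neg_neg]
        rcases hcase with hβ | hβ
        · refine ⟨β, abs_of_nonneg hβ0, ?_⟩
          have heq : c - β = -γ := by linarith
          rw [heq, abs_neg, abs_of_nonneg hγ0]
        · refine ⟨-β, by rw [abs_neg, abs_of_nonneg hβ0], ?_⟩
          have heq : c - -β = γ := by linarith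
          rw [heq, abs_of_nonneg hγ0]
    have hψlo : -π ≤ ψ := (abs_le.1 (hψβ.le.trans hβπ)).1
    have hψhi : ψ ≤ π := (abs_le.1 (hψβ.le.trans hβπ)).2
    have hcψlo : -π ≤ c - ψ := (abs_le.1 (hψγ.le.trans hγπ)).1
    have hcψhi : c - ψ ≤ π := (abs_le.1 (hψγ.le.trans hγπ)).2
    set s := dist p v / ‖fu - fv‖ with hs
    have hspos : 0 < s := div_pos hdpv (norm_pos_iff.2 hne1)
    set y := ori.rotation ((ψ : ℝ) : Real.Angle) (s • (fu - fv)) with hy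
    have hyne : y ≠ 0 := by
      rw [hy, Ne, LinearIsometryEquiv.map_eq_zero_iff, smul_eq_zero]
      push_neg
      exact ⟨hspos.ne', hne1⟩
    have hynorm : ‖y‖ = dist p v := by
      rw [hy, LinearIsometryEquiv.norm_map, norm_smul, Real.norm_eq_abs, abs_of_pos hspos, hs,
        div_mul_cancel₀ _ (norm_ne_zero_iff.2 hne1)]
    have hoay : ori.oangle (fu - fv) y = ((ψ : ℝ) : Real.Angle) := by
      rw [hy, map_smul, ori.oangle_smul_right_of_pos _ _ hspos,
        ori.oangle_rotation_self_right hne1]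
    have hoyb : ori.oangle y (fw - fv) = ((c - ψ : ℝ) : Real.Angle) := by
      rw [← ori.oangle_add hyne hne1 hne2, ori.oangle_rev, hoay,
        ← Real.Angle.coe_toReal (ori.oangle (fu - fv) (fw - fv)), ← hc,
        Real.Angle.coe_sub]
      abel
    have hang1 : ∠ (fv + y) fv fu = β := by
      rw [pt_angle, add_sub_cancel_left, InnerProductGeometry.angle_comm,
        ori.angle_eq_abs_oangle_toReal hne1 hyne, hoay, abs_toReal_coe hψlo hψhi, hψβ]
    have hang2 : ∠ (fv + y) fv fw = γ := by
      rw [pt_angle, add_sub_cancel_left,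
        ori.angle_eq_abs_oangle_toReal hyne hne2, hoyb, abs_toReal_coe hcψlo hcψhi, hψγ]
    have hdq : dist (fv + y) fv = dist p v := by
      rw [dist_eq_norm, add_sub_cancel_left, hynorm]
    refine ⟨fv + y, ?_, hdq, ?_⟩
    · exact (sss_dist_iff_angle p v u (fv + y) fv fu hdq h1 hpv huv).2 hang1
    · exact (sss_dist_iff_angle p v w (fv + y) fv fw hdq h2 hpv hwv).2 hang2
end
end

section
/- Let v, u, w ∈ R^2 with interior angle θ = ∠uvw, and f map {u,v,w} into R^d (d ≥ 3) with ‖f(u)−f(v)‖ = ‖u−v‖, ‖f(w)−f(v)‖ = ‖w−v‖, and ‖f(u)−f(w)‖ ≤ ‖u−w‖. Let φ = ∠f(u)f(v)f(w) and let p be a point in the sector at v with β = ∠pvu and θ−β = ∠pvw. If (θ−φ)/2 ≤ β ≤ (θ+φ)/2, then there exists q ∈ R^d with ‖q−f(v)‖ = ‖p−v‖, ∠qf(v)f(u) = β, and ∠qf(v)f(w) = θ−β; consequently ‖q−f(i)‖ = ‖p−i‖ for i ∈ {u,v,w}. -/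
set_option maxHeartbeats 1000000

open EuclideanGeometry Real
open scoped RealInnerProductSpace

private lemma bend_key_ineq {β γ φ : ℝ} (hβ0 : 0 ≤ β)
    (hγ0 : 0 ≤ γ) (hφ0 : 0 ≤ φ) (hφπ : φ ≤ π)
    (h1 : β - γ ≤ φ) (h2 : γ - β ≤ φ) (h3 : φ ≤ β + γ) (h4 : β + γ ≤ π) :
    |Real.cos γ - Real.cos β * Real.cos φ| ≤ Real.sin β * Real.sin φ := by
  have hγπ : γ ≤ π := by linarith
  rw [abs_le]
  constructor
  · by_cases h : β + φ ≤ π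
    · have hc : Real.cos (β + φ) ≤ Real.cos γ :=
        Real.cos_le_cos_of_nonneg_of_le_pi hγ0 h (by linarith)
      rw [Real.cos_add] at hc; linarith
    · have h2π : Real.cos (2 * π - (β + φ)) = Real.cos (β + φ) := by
        rw [Real.cos_sub]; simp
      have hc : Real.cos (2 * π - (β + φ)) ≤ Real.cos γ :=
        Real.cos_le_cos_of_nonneg_of_le_pi hγ0 (by linarith) (by linarith)
      rw [h2π, Real.cos_add] at hc; linarith
  · by_cases h : φ ≤ β
    · have hc : Real.cos γ ≤ Real.cos (β - φ) :=
        Real.cos_le_cos_of_nonneg_of_le_pi (by linarith) hγπ (by linarith)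
      rw [Real.cos_sub] at hc; linarith
    · have hc : Real.cos γ ≤ Real.cos (φ - β) :=
        Real.cos_le_cos_of_nonneg_of_le_pi (by linarith) hγπ (by linarith)
      rw [Real.cos_sub] at hc
      linarith [mul_comm (Real.cos φ) (Real.cos β), mul_comm (Real.sin φ) (Real.sin β)]

private lemma exists_orthonormal_third {d : ℕ} (hd : 3 ≤ d)
    (a b : EuclideanSpace ℝ (Fin d)) :
    ∃ e : EuclideanSpace ℝ (Fin d), ‖e‖ = 1 ∧ ⟪a, e⟫ = 0 ∧ ⟪b, e⟫ = 0 := by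
  set K : Submodule ℝ (EuclideanSpace ℝ (Fin d)) := Submodule.span ℝ {a, b} with hKdef
  have hK : Module.finrank ℝ K ≤ 2 := by
    classical
    refine le_trans (finrank_span_le_card _) ?_
    rw [Set.toFinset_insert, Set.toFinset_singleton]
    exact le_trans (Finset.card_insert_le _ _) (by simp)
  have hne : Kᗮ ≠ ⊥ := by
    intro hbot
    have h := Submodule.finrank_add_finrank_orthogonal K
    rw [hbot, finrank_bot, finrank_euclideanSpace_fin] at h
    omega
  obtain ⟨z, hzK, hz0⟩ := Submodule.exists_mem_ne_zero_of_ne_bot hne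
  have hza : ⟪a, z⟫ = 0 :=
    (Submodule.mem_orthogonal K z).1 hzK a (Submodule.subset_span (by simp))
  have hzb : ⟪b, z⟫ = 0 :=
    (Submodule.mem_orthogonal K z).1 hzK b (Submodule.subset_span (by simp))
  refine ⟨‖z‖⁻¹ • z, norm_smul_inv_norm hz0, ?_, ?_⟩
  · rw [real_inner_smul_right, hza, mul_zero]
  · rw [real_inner_smul_right, hzb, mul_zero]

private lemma exists_unit_with_inner {d : ℕ} (hd : 3 ≤ d)
    (a b : EuclideanSpace ℝ (Fin d)) (ha : ‖a‖ = 1) (hb : ‖b‖ = 1)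
    (β γ : ℝ) (hβ0 : 0 ≤ β) (hβπ : β ≤ π)
    (hkey : |Real.cos γ - Real.cos β * Real.cos (InnerProductGeometry.angle a b)| ≤
      Real.sin β * Real.sin (InnerProductGeometry.angle a b)) :
    ∃ x : EuclideanSpace ℝ (Fin d), ‖x‖ = 1 ∧ ⟪x, a⟫ = Real.cos β ∧ ⟪x, b⟫ = Real.cos γ := by
  obtain ⟨c, s, hcdef, hsdef⟩ : ∃ c s : ℝ, c = Real.cos (InnerProductGeometry.angle a b) ∧
      s = Real.sin (InnerProductGeometry.angle a b) := ⟨_, _, rfl, rfl⟩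
  rw [← hcdef, ← hsdef] at hkey
  have hab : ⟪a, b⟫ = c := by
    have h := InnerProductGeometry.cos_angle a b
    rw [ha, hb] at h
    rw [hcdef]
    simpa using h.symm
  have hs0 : 0 ≤ s := hsdef ▸ Real.sin_nonneg_of_nonneg_of_le_pi
    (InnerProductGeometry.angle_nonneg a b) (InnerProductGeometry.angle_le_pi a b)
  have hcs : c ^ 2 + s ^ 2 = 1 := by
    rw [hcdef, hsdef, add_comm]; exact Real.sin_sq_add_cos_sq _
  have hsb0 : 0 ≤ Real.sin β := Real.sin_nonneg_of_nonneg_of_le_pi hβ0 hβπ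
  obtain ⟨c2, hc2def⟩ : ∃ c2 : ℝ, c2 = (Real.cos γ - Real.cos β * c) / s := ⟨_, rfl⟩
  have hc2sq : c2 ^ 2 ≤ Real.sin β ^ 2 := by
    rcases eq_or_lt_of_le hs0 with hs | hs
    · rw [hc2def, ← hs, div_zero]
      simpa using sq_nonneg (Real.sin β)
    · have habs : |c2| ≤ Real.sin β := by
        rw [hc2def, abs_div, abs_of_pos hs, div_le_iff₀ hs]
        exact hkey
      calc c2 ^ 2 = |c2| ^ 2 := (sq_abs c2).symm
        _ ≤ Real.sin β ^ 2 := pow_le_pow_left₀ (abs_nonneg c2) habs 2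
  have hc2z : s = 0 → c2 = 0 := fun h => by rw [hc2def, h, div_zero]
  obtain ⟨c3, hc3def⟩ : ∃ c3 : ℝ, c3 = Real.sqrt (Real.sin β ^ 2 - c2 ^ 2) := ⟨_, rfl⟩
  have hc3sq : c3 ^ 2 = Real.sin β ^ 2 - c2 ^ 2 := by
    rw [hc3def]; exact Real.sq_sqrt (by linarith)
  obtain ⟨e3, he3n, hae3, hbe3'⟩ := exists_orthonormal_third hd a b
  have haa : ⟪a, a⟫ = 1 := by rw [real_inner_self_eq_norm_mul_norm, ha, mul_one]
  have hbb : ⟪b, b⟫ = 1 := by rw [real_inner_self_eq_norm_mul_norm, hb, mul_one]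
  have hba : ⟪b, a⟫ = c := by rw [real_inner_comm]; exact hab
  have he3e3 : ⟪e3, e3⟫ = 1 := by rw [real_inner_self_eq_norm_mul_norm, he3n, mul_one]
  have he3a : ⟪e3, a⟫ = 0 := by rw [real_inner_comm]; exact hae3
  have he3b : ⟪e3, b⟫ = 0 := by rw [real_inner_comm]; exact hbe3'
  obtain ⟨e2, hae2, he2b, he2e2, he2e3⟩ :
      ∃ e2 : EuclideanSpace ℝ (Fin d), ⟪e2, a⟫ = 0 ∧ ⟪e2, b⟫ = s⁻¹ * s ^ 2 ∧
        ⟪e2, e2⟫ = s⁻¹ ^ 2 * s ^ 2 ∧ ⟪e2, e3⟫ = 0 := by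
    refine ⟨s⁻¹ • (b - c • a), ?_, ?_, ?_, ?_⟩
    · simp only [real_inner_smul_left, inner_sub_left, real_inner_smul_left, hba, haa]
      ring
    · simp only [real_inner_smul_left, inner_sub_left, real_inner_smul_left, hbb, hba, hab]
      linear_combination (-s⁻¹) * hcs
    · simp only [real_inner_smul_left, real_inner_smul_right, inner_sub_left, inner_sub_right,
        real_inner_smul_left, real_inner_smul_right, haa, hab, hba, hbb]
      linear_combination (-(s⁻¹^2)) * hcs
    · simp only [real_inner_smul_left, inner_sub_left, real_inner_smul_left, he3a, he3b,
        real_inner_comm e3 a, real_inner_comm e3 b]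
      ring
  have hae2' : ⟪a, e2⟫ = 0 := by rw [real_inner_comm]; exact hae2
  have hbe2 : ⟪b, e2⟫ = s⁻¹ * s ^ 2 := by rw [real_inner_comm]; exact he2b
  have he3e2 : ⟪e3, e2⟫ = 0 := by rw [real_inner_comm]; exact he2e3
  refine ⟨Real.cos β • a + c2 • e2 + c3 • e3, ?_, ?_, ?_⟩
  · have hxx : ⟪(Real.cos β • a + c2 • e2 + c3 • e3 : EuclideanSpace ℝ (Fin d)),
        Real.cos β • a + c2 • e2 + c3 • e3⟫ = Real.cos β ^ 2 + c2 ^ 2 * (s⁻¹ ^ 2 * s ^ 2)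
          + c3 ^ 2 := by
      simp only [inner_add_left, inner_add_right, real_inner_smul_left, real_inner_smul_right,
        haa, hab, hba, hbb, hae2, hae2', he2b, hbe2, he2e2, he2e3, he3e2, he3a, he3b, he3e3,
        hae3, hbe3']
      ring
    have hscal : Real.cos β ^ 2 + c2 ^ 2 * (s⁻¹ ^ 2 * s ^ 2) + c3 ^ 2 = 1 := by
      rcases eq_or_lt_of_le hs0 with hs | hs
      · rw [hc2z hs.symm] at hc3sq ⊢
        linear_combination hc3sq + Real.sin_sq_add_cos_sq β
      · have h1 : s⁻¹ ^ 2 * s ^ 2 = 1 := by field_simp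
        rw [h1]
        linear_combination hc3sq + Real.sin_sq_add_cos_sq β
    rw [hscal] at hxx
    have hn := real_inner_self_eq_norm_mul_norm
      (Real.cos β • a + c2 • e2 + c3 • e3 : EuclideanSpace ℝ (Fin d))
    rw [hxx] at hn
    rcases mul_self_eq_one_iff.mp hn.symm with h | h
    · exact h
    · exfalso
      have := norm_nonneg (Real.cos β • a + c2 • e2 + c3 • e3 : EuclideanSpace ℝ (Fin d))
      rw [h] at this
      linarith
  · simp only [inner_add_left, real_inner_smul_left, haa, hae2, he3a]
    ring
  · simp only [inner_add_left, real_inner_smul_left, hab, he2b, he3b]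
    rcases eq_or_lt_of_le hs0 with hs | hs
    · have h0 : c2 = 0 := hc2z hs.symm
      have hnum : Real.cos γ - Real.cos β * c = 0 := by
        rw [← hs, mul_zero, abs_nonpos_iff] at hkey
        exact hkey
      rw [h0]
      ring_nf
      linarith
    · have hc2s : c2 * (s⁻¹ * s ^ 2) = Real.cos γ - Real.cos β * c := by
        have hsne : s ≠ 0 := ne_of_gt hs
        have hss : s⁻¹ * s ^ 2 = s := by
          rw [pow_two, ← mul_assoc, inv_mul_cancel₀ hsne, one_mul]
        rw [hc2def, hss, div_mul_cancel₀ _ hsne]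
      linarith [hc2s]

/-- Lemma bend, d ≥ 3: if (θ−φ)/2 ≤ β ≤ (θ+φ)/2, there is a bend point
image q ∈ ℝ^d at distance ‖p−v‖ from f(v) making angles β and θ−β with the images of the
edges; consequently q preserves the distances from p to u, v, w. -/
theorem bend_points_high_dim {d : ℕ} (hd : 3 ≤ d)
    (u v w p : EuclideanSpace ℝ (Fin 2))
    (fu fv fw : EuclideanSpace ℝ (Fin d))
    (huv : u ≠ v) (hwv : w ≠ v) (hpv : p ≠ v)
    (h1 : dist fu fv = dist u v) (h2 : dist fw fv = dist w v)
    (hcontr : dist fu fw ≤ dist u w)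
    -- p lies in the sector at v: ∠pvu = β and ∠pvw = θ − β
    (hsector : ∠ p v u + ∠ p v w = ∠ u v w)
    (hlow : (∠ u v w - ∠ fu fv fw) / 2 ≤ ∠ p v u)
    (hhigh : ∠ p v u ≤ (∠ u v w + ∠ fu fv fw) / 2) :
    ∃ q : EuclideanSpace ℝ (Fin d),
      dist q fv = dist p v ∧
      ∠ q fv fu = ∠ p v u ∧
      ∠ q fv fw = ∠ u v w - ∠ p v u ∧
      dist q fu = dist p u ∧ dist q fw = dist p w := by
  have hduv : (0:ℝ) < dist u v := dist_pos.2 huv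
  have hdwv : (0:ℝ) < dist w v := dist_pos.2 hwv
  have hdpv : (0:ℝ) < dist p v := dist_pos.2 hpv
  have hfufv : fu ≠ fv := by rw [← dist_pos, h1]; exact hduv
  have hfwfv : fw ≠ fv := by rw [← dist_pos, h2]; exact hdwv
  have hAne : fu - fv ≠ 0 := sub_ne_zero.2 hfufv
  have hBne : fw - fv ≠ 0 := sub_ne_zero.2 hfwfv
  obtain ⟨a, hadef⟩ : ∃ a : EuclideanSpace ℝ (Fin d), a = ‖fu - fv‖⁻¹ • (fu - fv) := ⟨_, rfl⟩
  obtain ⟨b, hbdef⟩ : ∃ b : EuclideanSpace ℝ (Fin d), b = ‖fw - fv‖⁻¹ • (fw - fv) := ⟨_, rfl⟩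
  have ha : ‖a‖ = 1 := by rw [hadef]; exact norm_smul_inv_norm hAne
  have hb : ‖b‖ = 1 := by rw [hbdef]; exact norm_smul_inv_norm hBne
  have hA : fu - fv = ‖fu - fv‖ • a := by
    rw [hadef, smul_smul, mul_inv_cancel₀ (norm_ne_zero_iff.2 hAne), one_smul]
  have hB : fw - fv = ‖fw - fv‖ • b := by
    rw [hbdef, smul_smul, mul_inv_cancel₀ (norm_ne_zero_iff.2 hBne), one_smul]
  have hangle_ab : InnerProductGeometry.angle a b = ∠ fu fv fw := by
    have h0 : ∠ fu fv fw = InnerProductGeometry.angle (fu - fv) (fw - fv) := by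
      simp [EuclideanGeometry.angle, vsub_eq_sub]
    rw [h0, hA, hB, InnerProductGeometry.angle_smul_left_of_pos _ _ (norm_pos_iff.2 hAne),
      InnerProductGeometry.angle_smul_right_of_pos _ _ (norm_pos_iff.2 hBne)]
  -- φ ≤ θ from the contraction hypothesis, via the law of cosines
  have lc1 := EuclideanGeometry.law_cos fu fv fw
  have lc2 := EuclideanGeometry.law_cos u v w
  have hsq : dist fu fw * dist fu fw ≤ dist u w * dist u w :=
    mul_self_le_mul_self dist_nonneg hcontr
  have hcosle : Real.cos (∠ u v w) ≤ Real.cos (∠ fu fv fw) := by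
    rw [h1, h2] at lc1
    nlinarith [mul_pos hduv hdwv]
  have hφθ : ∠ fu fv fw ≤ ∠ u v w := by
    by_contra hlt
    push_neg at hlt
    have := Real.cos_lt_cos_of_nonneg_of_le_pi (EuclideanGeometry.angle_nonneg u v w)
      (EuclideanGeometry.angle_le_pi fu fv fw) hlt
    linarith
  have hβ0 := EuclideanGeometry.angle_nonneg p v u
  have hβπ := EuclideanGeometry.angle_le_pi p v u
  have hγ0 : 0 ≤ ∠ u v w - ∠ p v u := by
    linarith [EuclideanGeometry.angle_nonneg p v w]
  have hθπ := EuclideanGeometry.angle_le_pi u v w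
  have hγπ : ∠ u v w - ∠ p v u ≤ π := by linarith
  have hφ0 := EuclideanGeometry.angle_nonneg fu fv fw
  have hφπ := EuclideanGeometry.angle_le_pi fu fv fw
  have hkey := bend_key_ineq hβ0 hγ0 hφ0 hφπ (by linarith) (by linarith) (by linarith)
    (by linarith)
  rw [← hangle_ab] at hkey
  obtain ⟨x, hx1, hxa, hxb⟩ := exists_unit_with_inner hd a b ha hb _ _ hβ0 hβπ hkey
  have hq1 : dist (fv + dist p v • x) fv = dist p v := by
    rw [dist_eq_norm, add_sub_cancel_left, norm_smul, hx1, mul_one, Real.norm_eq_abs,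
      abs_of_pos hdpv]
  have hq2 : ∠ (fv + dist p v • x) fv fu = ∠ p v u := by
    have h0 : ∠ (fv + dist p v • x) fv fu
        = InnerProductGeometry.angle (dist p v • x) (fu - fv) := by
      simp [EuclideanGeometry.angle, vsub_eq_sub, add_sub_cancel_left]
    rw [h0, InnerProductGeometry.angle_smul_left_of_pos _ _ hdpv, hA,
      InnerProductGeometry.angle_smul_right_of_pos _ _ (norm_pos_iff.2 hAne),
      InnerProductGeometry.angle, hxa, hx1, ha, mul_one, div_one]
    exact Real.arccos_cos hβ0 hβπ
  have hq3 : ∠ (fv + dist p v • x) fv fw = ∠ u v w - ∠ p v u := by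
    have h0 : ∠ (fv + dist p v • x) fv fw
        = InnerProductGeometry.angle (dist p v • x) (fw - fv) := by
      simp [EuclideanGeometry.angle, vsub_eq_sub, add_sub_cancel_left]
    rw [h0, InnerProductGeometry.angle_smul_left_of_pos _ _ hdpv, hB,
      InnerProductGeometry.angle_smul_right_of_pos _ _ (norm_pos_iff.2 hBne),
      InnerProductGeometry.angle, hxb, hx1, hb, mul_one, div_one]
    exact Real.arccos_cos hγ0 hγπ
  refine ⟨fv + dist p v • x, hq1, hq2, hq3, ?_, ?_⟩
  · have lcq := EuclideanGeometry.law_cos (fv + dist p v • x) fv fu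
    have lcp := EuclideanGeometry.law_cos p v u
    rw [hq1, hq2, h1] at lcq
    have heq : dist (fv + dist p v • x) fu * dist (fv + dist p v • x) fu
        = dist p u * dist p u := by rw [lcq, lcp]
    calc dist (fv + dist p v • x) fu
        = Real.sqrt (dist (fv + dist p v • x) fu * dist (fv + dist p v • x) fu) :=
          (Real.sqrt_mul_self dist_nonneg).symm
      _ = Real.sqrt (dist p u * dist p u) := by rw [heq]
      _ = dist p u := Real.sqrt_mul_self dist_nonneg
  · have lcq := EuclideanGeometry.law_cos (fv + dist p v • x) fv fw
    have lcp := EuclideanGeometry.law_cos p v w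
    have hpvw : ∠ p v w = ∠ u v w - ∠ p v u := by linarith
    rw [hq1, hq3, h2] at lcq
    rw [hpvw] at lcp
    have heq : dist (fv + dist p v • x) fw * dist (fv + dist p v • x) fw
        = dist p w * dist p w := by rw [lcq, lcp]
    calc dist (fv + dist p v • x) fw
        = Real.sqrt (dist (fv + dist p v • x) fw * dist (fv + dist p v • x) fw) :=
          (Real.sqrt_mul_self dist_nonneg).symm
      _ = Real.sqrt (dist p w * dist p w) := by rw [heq]
      _ = dist p w := Real.sqrt_mul_self dist_nonneg
end

section
/- Let P be a polygon with valid boundary mapping f : ∂P → R^d, and suppose u, v ∈ V(P) are nonadjacent vertices with ‖f(u)−f(v)‖ = ‖u−v‖ and the segment L from u to v contained in P. Split P along L into polygons P₁ and P₂, and define f₁ : ∂P₁ → R^d and f₂ : ∂P₂ → R^d by agreeing with f on ∂P and mapping L affinely-isometrically onto the segment from f(u) to f(v). Then f₁ and f₂ are valid boundary mappings: ∂Pᵢ is nonexpansive under fᵢ and adjacent vertices of Pᵢ are critical under fᵢ, for i = 1, 2. -/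
lemma norm_combo_sq {E : Type*} [NormedAddCommGroup E] [InnerProductSpace ℝ E]
    (x y : E) (t : ℝ) :
    ‖(1 - t) • x + t • y‖ ^ 2
      = (1 - t) * ‖x‖ ^ 2 + t * ‖y‖ ^ 2 - t * (1 - t) * ‖x - y‖ ^ 2 := by
  simp only [← real_inner_self_eq_norm_sq, inner_add_add_self, inner_sub_sub_self,
    real_inner_smul_left, real_inner_smul_right]
  ring

/-- Crossing lemma: if `p` is nonexpansively placed relative to the images of the
critical pair `u, v`, then it is nonexpansive to the affine image of any point on
the segment from `u` to `v`. -/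
lemma crossing {E F : Type*} [NormedAddCommGroup E] [InnerProductSpace ℝ E]
    [NormedAddCommGroup F] [InnerProductSpace ℝ F]
    {u v b : E} {fu fv p : F} {t : ℝ} (ht0 : 0 ≤ t) (ht1 : t ≤ 1)
    (h1 : dist p fu ≤ dist b u) (h2 : dist p fv ≤ dist b v)
    (h3 : dist fu fv = dist u v) :
    dist p (fu + t • (fv - fu)) ≤ dist b (u + t • (v - u)) := by
  simp only [dist_eq_norm] at *
  have hA : p - (fu + t • (fv - fu)) = (1 - t) • (p - fu) + t • (p - fv) := by
    simp [smul_sub, sub_smul]; abel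
  have hB : b - (u + t • (v - u)) = (1 - t) • (b - u) + t • (b - v) := by
    simp [smul_sub, sub_smul]; abel
  rw [hA, hB]
  have eA := norm_combo_sq (p - fu) (p - fv) t
  have eB := norm_combo_sq (b - u) (b - v) t
  have hfuv : (p - fu) - (p - fv) = fv - fu := by abel
  have huv : (b - u) - (b - v) = v - u := by abel
  rw [hfuv] at eA
  rw [huv] at eB
  have h3' : ‖fv - fu‖ = ‖v - u‖ := by rw [norm_sub_rev, norm_sub_rev v u]; exact h3
  have k1 : (1 - t) * ‖p - fu‖ ^ 2 ≤ (1 - t) * ‖b - u‖ ^ 2 :=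
    mul_le_mul_of_nonneg_left (pow_le_pow_left₀ (norm_nonneg _) h1 2) (by linarith)
  have k2 : t * ‖p - fv‖ ^ 2 ≤ t * ‖b - v‖ ^ 2 :=
    mul_le_mul_of_nonneg_left (pow_le_pow_left₀ (norm_nonneg _) h2 2) ht0
  have hsq : ‖(1 - t) • (p - fu) + t • (p - fv)‖ ^ 2
      ≤ ‖(1 - t) • (b - u) + t • (b - v)‖ ^ 2 := by
    rw [eA, eB, h3']; linarith
  nlinarith [norm_nonneg ((1 - t) • (p - fu) + t • (p - fv)),
    norm_nonneg ((1 - t) • (b - u) + t • (b - v)), hsq]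

/-- Lemma critical: splitting a polygon with valid boundary
mapping f along a diagonal L between nonadjacent critical vertices u = V j, v = V k,
and extending f affinely-isometrically over L, yields valid boundary mappings for
both pieces: every pair of points of (boundary ∪ L) is nonexpansive, all original
adjacent vertex pairs remain critical, and the new edge L is critical. -/
theorem split_along_critical_diagonal {d n : ℕ} (hn : 3 ≤ n)
    (V : ZMod n → EuclideanSpace ℝ (Fin 2)) (hinj : Function.Injective V)
    (P : Set (EuclideanSpace ℝ (Fin 2)))
    (hbP : (⋃ i : ZMod n, segment ℝ (V i) (V (i + 1))) ⊆ P)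
    (f : EuclideanSpace ℝ (Fin 2) → EuclideanSpace ℝ (Fin d))
    -- f is valid: the boundary is nonexpansive and adjacent vertices are critical
    (hval : ∀ a ∈ ⋃ i : ZMod n, segment ℝ (V i) (V (i + 1)),
        ∀ b ∈ ⋃ i : ZMod n, segment ℝ (V i) (V (i + 1)), dist (f a) (f b) ≤ dist a b)
    (hadj : ∀ i : ZMod n, dist (f (V i)) (f (V (i + 1))) = dist (V i) (V (i + 1)))
    (j k : ZMod n)
    -- u = V j and v = V k are nonadjacent …
    (hjk : k ≠ j) (hjk1 : k ≠ j + 1) (hkj1 : j ≠ k + 1)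
    -- … mutually visible (the diagonal lies in P) and critical under f
    (hseg : segment ℝ (V j) (V k) ⊆ P)
    (hcrit : dist (f (V j)) (f (V k)) = dist (V j) (V k))
    -- f' agrees with f on the boundary and maps the diagonal affinely-isometrically
    (f' : EuclideanSpace ℝ (Fin 2) → EuclideanSpace ℝ (Fin d))
    (hf'bd : ∀ x ∈ ⋃ i : ZMod n, segment ℝ (V i) (V (i + 1)), f' x = f x)
    (hf'L : ∀ t ∈ Set.Icc (0 : ℝ) 1,
        f' (V j + t • (V k - V j)) = f (V j) + t • (f (V k) - f (V j))) :
    -- the partition boundary mappings are valid: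
    (∀ a ∈ (⋃ i : ZMod n, segment ℝ (V i) (V (i + 1))) ∪ segment ℝ (V j) (V k),
        ∀ b ∈ (⋃ i : ZMod n, segment ℝ (V i) (V (i + 1))) ∪ segment ℝ (V j) (V k),
          dist (f' a) (f' b) ≤ dist a b) ∧
      (∀ i : ZMod n, dist (f' (V i)) (f' (V (i + 1))) = dist (V i) (V (i + 1))) ∧
      dist (f' (V j)) (f' (V k)) = dist (V j) (V k) := by
  set Bd := ⋃ i : ZMod n, segment ℝ (V i) (V (i + 1)) with hBd
  have hVmem : ∀ i : ZMod n, V i ∈ Bd := fun i =>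
    Set.mem_iUnion.2 ⟨i, left_mem_segment ℝ _ _⟩
  have hVj : V j ∈ Bd := hVmem j
  have hVk : V k ∈ Bd := hVmem k
  -- description of points of L
  have hL : ∀ x ∈ segment ℝ (V j) (V k), ∃ t : ℝ, 0 ≤ t ∧ t ≤ 1 ∧
      x = V j + t • (V k - V j) ∧ f' x = f (V j) + t • (f (V k) - f (V j)) := by
    intro x hx
    rw [segment_eq_image'] at hx
    obtain ⟨t, ht, hxe⟩ := hx
    exact ⟨t, ht.1, ht.2, hxe.symm, by rw [← hxe]; exact hf'L t ht⟩
  -- nonexpansiveness from a boundary point to a point of L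
  have key : ∀ a ∈ Bd, ∀ x ∈ segment ℝ (V j) (V k), dist (f' a) (f' x) ≤ dist a x := by
    intro a ha x hx
    obtain ⟨t, ht0, ht1, hxe, hfx⟩ := hL x hx
    rw [hf'bd a ha, hfx, hxe]
    exact crossing ht0 ht1 (hval a ha (V j) hVj) (hval a ha (V k) hVk) hcrit
  refine ⟨?_, ?_, ?_⟩
  · intro a ha b hb
    rcases ha with ha | ha <;> rcases hb with hb | hb
    · rw [hf'bd a ha, hf'bd b hb]; exact hval a ha b hb
    · exact key a ha b hb
    · rw [dist_comm, dist_comm a b]; exact key b hb a ha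
    · obtain ⟨s, hs0, hs1, hae, hfa⟩ := hL a ha
      obtain ⟨t, ht0, ht1, hbe, hfb⟩ := hL b hb
      rw [hfa, hfb, hae, hbe, dist_eq_norm, dist_eq_norm]
      have h1 : (f (V j) + s • (f (V k) - f (V j))) - (f (V j) + t • (f (V k) - f (V j)))
          = (s - t) • (f (V k) - f (V j)) := by rw [sub_smul]; abel
      have h2 : (V j + s • (V k - V j)) - (V j + t • (V k - V j))
          = (s - t) • (V k - V j) := by rw [sub_smul]; abel
      rw [h1, h2, norm_smul, norm_smul]
      have : ‖f (V k) - f (V j)‖ = ‖V k - V j‖ := by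
        rw [← dist_eq_norm, ← dist_eq_norm, dist_comm, dist_comm (V k)]; exact hcrit
      rw [this]
  · intro i
    rw [hf'bd _ (hVmem i), hf'bd _ (hVmem (i + 1))]
    exact hadj i
  · rw [hf'bd _ hVj, hf'bd _ hVk]; exact hcrit
end

section
/- Let u, v, w, x be points in R^2 with x in the interior of triangle △uvw, and f map all four into R^d. If ‖f(a)−f(b)‖ = ‖a−b‖ for all pairs a,b ∈ {u,v,w}, and {x,u,v,w} is nonexpansive under f, then all pairwise distances in {x,u,v,w} are preserved: {x,u,v,w} is critical under f. -/
lemma combo_identity {F : Type*} [NormedAddCommGroup F] [InnerProductSpace ℝ F]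
    (a b c : ℝ) (h : a + b + c = 1) (U V W y : F) :
    a * ‖y - U‖^2 + b * ‖y - V‖^2 + c * ‖y - W‖^2 =
      ‖y - (a • U + b • V + c • W)‖^2 +
        (a * b * ‖U - V‖^2 + b * c * ‖V - W‖^2 + a * c * ‖U - W‖^2) := by
  have hc : c = 1 - a - b := by linarith
  subst hc
  simp only [← real_inner_self_eq_norm_sq, inner_sub_left, inner_sub_right,
    inner_add_left, inner_add_right, inner_smul_left, inner_smul_right,
    RCLike.ofReal_real_eq_id, id_eq, starRingEnd_apply, star_trivial,
    real_inner_comm U V, real_inner_comm U W,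
    real_inner_comm V W, real_inner_comm y U, real_inner_comm y V, real_inner_comm y W]
  ring

/-- if x lies in the interior of triangle uvw, the triangle is mapped
rigidly (all pairwise distances of {u,v,w} preserved) and {x,u,v,w} is nonexpansive
under f, then {x,u,v,w} is critical under f. -/
theorem interior_point_rigid {d : ℕ}
    (u v w x : EuclideanSpace ℝ (Fin 2))
    (hx : x ∈ interior (convexHull ℝ ({u, v, w} : Set (EuclideanSpace ℝ (Fin 2)))))
    (f : EuclideanSpace ℝ (Fin 2) → EuclideanSpace ℝ (Fin d))
    (huv : dist (f u) (f v) = dist u v)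
    (hvw : dist (f v) (f w) = dist v w)
    (huw : dist (f u) (f w) = dist u w)
    (hxu : dist (f x) (f u) ≤ dist x u)
    (hxv : dist (f x) (f v) ≤ dist x v)
    (hxw : dist (f x) (f w) ≤ dist x w) :
    dist (f x) (f u) = dist x u ∧ dist (f x) (f v) = dist x v ∧
      dist (f x) (f w) = dist x w := by
  set p : Fin 3 → EuclideanSpace ℝ (Fin 2) := ![u, v, w] with hp
  have hrange : Set.range p = ({u, v, w} : Set (EuclideanSpace ℝ (Fin 2))) := by
    ext y; simp [hp, Fin.exists_fin_succ, or_assoc]; tauto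
  have hspan : affineSpan ℝ ({u, v, w} : Set (EuclideanSpace ℝ (Fin 2))) = ⊤ :=
    affineSpan_eq_top_of_nonempty_interior ⟨x, hx⟩
  have hspan' : affineSpan ℝ (Set.range p) = ⊤ := by rw [hrange]; exact hspan
  have hind : AffineIndependent ℝ p := by
    rw [affineIndependent_iff_finrank_vectorSpan_eq ℝ p (by norm_num : Fintype.card (Fin 3) = 2 + 1)]
    rw [← direction_affineSpan, hspan', AffineSubspace.direction_top]
    simp [finrank_euclideanSpace_fin]
  let b : AffineBasis (Fin 3) ℝ (EuclideanSpace ℝ (Fin 2)) := ⟨p, hind, hspan'⟩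
  have hbp : ⇑b = p := rfl
  have hpos : ∀ i, 0 < b.coord i x := by
    have := b.interior_convexHull
    rw [hbp, hrange] at this
    rw [this] at hx
    exact hx
  have hsum : b.coord 0 x + b.coord 1 x + b.coord 2 x = 1 := by
    have := b.sum_coord_apply_eq_one x
    rwa [Fin.sum_univ_three] at this
  have hcombo : b.coord 0 x • u + b.coord 1 x • v + b.coord 2 x • w = x := by
    have := b.linear_combination_coord_eq_self x
    rwa [Fin.sum_univ_three, hbp] at this
  set a := b.coord 0 x
  set bb := b.coord 1 x
  set c := b.coord 2 x
  have ha := hpos 0; have hb := hpos 1; have hc := hpos 2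
  have h1 := combo_identity a bb c hsum u v w x
  rw [hcombo, sub_self, norm_zero] at h1
  have h2 := combo_identity a bb c hsum (f u) (f v) (f w) (f x)
  simp only [dist_eq_norm] at hxu hxv hxw huv hvw huw
  rw [huv, hvw, huw] at h2
  have k1 : ‖f x - f u‖^2 ≤ ‖x - u‖^2 := pow_le_pow_left₀ (norm_nonneg _) hxu 2
  have k2 : ‖f x - f v‖^2 ≤ ‖x - v‖^2 := pow_le_pow_left₀ (norm_nonneg _) hxv 2
  have k3 : ‖f x - f w‖^2 ≤ ‖x - w‖^2 := pow_le_pow_left₀ (norm_nonneg _) hxw 2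
  have hnn : (0:ℝ) ≤ ‖f x - (a • f u + bb • f v + c • f w)‖^2 := sq_nonneg _
  have m1 : a * ‖f x - f u‖^2 = a * ‖x - u‖^2 := by
    linarith [mul_le_mul_of_nonneg_left k2 hb.le, mul_le_mul_of_nonneg_left k3 hc.le,
      mul_le_mul_of_nonneg_left k1 ha.le]
  have m2 : bb * ‖f x - f v‖^2 = bb * ‖x - v‖^2 := by
    linarith [mul_le_mul_of_nonneg_left k1 ha.le, mul_le_mul_of_nonneg_left k3 hc.le,
      mul_le_mul_of_nonneg_left k2 hb.le]
  have m3 : c * ‖f x - f w‖^2 = c * ‖x - w‖^2 := by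
    linarith [mul_le_mul_of_nonneg_left k1 ha.le, mul_le_mul_of_nonneg_left k2 hb.le,
      mul_le_mul_of_nonneg_left k3 hc.le]
  have e1 : ‖f x - f u‖^2 = ‖x - u‖^2 := mul_left_cancel₀ ha.ne' m1
  have e2 : ‖f x - f v‖^2 = ‖x - v‖^2 := mul_left_cancel₀ hb.ne' m2
  have e3 : ‖f x - f w‖^2 = ‖x - w‖^2 := mul_left_cancel₀ hc.ne' m3
  simp only [dist_eq_norm]
  refine ⟨?_, ?_, ?_⟩
  · rw [← abs_of_nonneg (norm_nonneg (f x - f u)), ← abs_of_nonneg (norm_nonneg (x - u)),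
      ← Real.sqrt_sq_eq_abs, ← Real.sqrt_sq_eq_abs, e1]
  · rw [← abs_of_nonneg (norm_nonneg (f x - f v)), ← abs_of_nonneg (norm_nonneg (x - v)),
      ← Real.sqrt_sq_eq_abs, ← Real.sqrt_sq_eq_abs, e2]
  · rw [← abs_of_nonneg (norm_nonneg (f x - f w)), ← abs_of_nonneg (norm_nonneg (x - w)),
      ← Real.sqrt_sq_eq_abs, ← Real.sqrt_sq_eq_abs, e3]
end

section
/- Let u, v, w be non-collinear points in R^2 and x ∈ R^2 arbitrary. If q ∈ R^d satisfies ‖q−f(u)‖ ≤ ‖x−u‖, ‖q−f(v)‖ ≤ ‖x−v‖, ‖q−f(w)‖ ≤ ‖x−w‖ where f(u), f(v), f(w) ∈ R^d have the same pairwise distances as u, v, w, and x lies in the closed triangle uvw, then all three inequalities are equalities and q is the image of x under the unique affine isometry taking u,v,w to f(u),f(v),f(w). -/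
open RealInnerProductSpace

lemma norm_comb_sq {F : Type*} [NormedAddCommGroup F] [InnerProductSpace ℝ F]
    (V W : F) (a b : ℝ) :
    ‖a • V + b • W‖ ^ 2 = a^2 * ‖V‖^2 + 2*a*b*⟪V, W⟫ + b^2 * ‖W‖^2 := by
  rw [norm_add_sq_real, norm_smul, norm_smul, real_inner_smul_left, real_inner_smul_right]
  simp [mul_pow, sq_abs]
  ring

lemma core_pin {F : Type*} [NormedAddCommGroup F] [InnerProductSpace ℝ F]
    (V' W' q' : F) (a b nV nW iVW : ℝ)
    (ha : 0 ≤ a) (hb : 0 ≤ b) (hab : a + b ≤ 1)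
    (hV : ‖V'‖ ^ 2 = nV) (hW : ‖W'‖ ^ 2 = nW) (hi : ⟪V', W'⟫ = iVW)
    (h1 : ‖q'‖ ^ 2 ≤ a^2*nV + 2*a*b*iVW + b^2*nW)
    (h2 : ‖q' - V'‖ ^ 2 ≤ (a-1)^2*nV + 2*(a-1)*b*iVW + b^2*nW)
    (h3 : ‖q' - W'‖ ^ 2 ≤ a^2*nV + 2*a*(b-1)*iVW + (b-1)^2*nW) :
    q' = a • V' + b • W' := by
  have e2 : ‖q' - V'‖^2 = ‖q'‖^2 - 2*⟪q', V'⟫ + nV := by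
    rw [norm_sub_sq_real, hV]
  have e3 : ‖q' - W'‖^2 = ‖q'‖^2 - 2*⟪q', W'⟫ + nW := by
    rw [norm_sub_sq_real, hW]
  have ep : ‖q' - (a • V' + b • W')‖^2
      = ‖q'‖^2 - 2*(a*⟪q', V'⟫ + b*⟪q', W'⟫)
        + (a^2*nV + 2*a*b*iVW + b^2*nW) := by
    rw [norm_sub_sq_real, norm_comb_sq, hV, hW, hi, inner_add_right,
      real_inner_smul_right, real_inner_smul_right]
  have key : ‖q' - (a • V' + b • W')‖^2 ≤ 0 := by
    nlinarith [mul_le_mul_of_nonneg_left h2 ha, mul_le_mul_of_nonneg_left h3 hb,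
      mul_le_mul_of_nonneg_left h1 (by linarith : (0:ℝ) ≤ 1 - a - b)]
  have : q' - (a • V' + b • W') = 0 := by
    have := sq_nonneg ‖q' - (a • V' + b • W')‖
    have h0 : ‖q' - (a • V' + b • W')‖ = 0 := by nlinarith [norm_nonneg (q' - (a • V' + b • W'))]
    exact norm_eq_zero.mp h0
  
  exact sub_eq_zero.mp this


set_option maxHeartbeats 1000000 in
/-- a point x of the closed triangle uvw has no slack: if q is
nonexpansive with the rigidly mapped anchors f(u), f(v), f(w), then all three distance
constraints are tight and q is the image of x under the unique affine isometry taking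
u, v, w to f(u), f(v), f(w). -/
theorem triangle_point_pinned {d : ℕ}
    (u v w x : EuclideanSpace ℝ (Fin 2))
    (hncol : ¬ Collinear ℝ ({u, v, w} : Set (EuclideanSpace ℝ (Fin 2))))
    (hx : x ∈ convexHull ℝ ({u, v, w} : Set (EuclideanSpace ℝ (Fin 2))))
    (fu fv fw : EuclideanSpace ℝ (Fin d))
    (huv : dist fu fv = dist u v)
    (hvw : dist fv fw = dist v w)
    (huw : dist fu fw = dist u w)
    (q : EuclideanSpace ℝ (Fin d))
    (hqu : dist q fu ≤ dist x u)
    (hqv : dist q fv ≤ dist x v)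
    (hqw : dist q fw ≤ dist x w) :
    dist q fu = dist x u ∧ dist q fv = dist x v ∧ dist q fw = dist x w ∧
      ∀ a b : ℝ, 0 ≤ a → 0 ≤ b → a + b ≤ 1 →
        x = u + a • (v - u) + b • (w - u) →
        q = fu + a • (fv - fu) + b • (fw - fu) := by
  -- norms of difference vectors
  have hVn : ‖fv - fu‖ = ‖v - u‖ := by
    rw [← dist_eq_norm, ← dist_eq_norm, dist_comm fv fu, dist_comm v u]; exact huv
  have hWn : ‖fw - fu‖ = ‖w - u‖ := by
    rw [← dist_eq_norm, ← dist_eq_norm, dist_comm fw fu, dist_comm w u]; exact huw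
  have hD : (fv - fu) - (fw - fu) = fv - fw := by abel
  have hD' : (v - u) - (w - u) = v - w := by abel
  have hVWn : ‖(fv - fu) - (fw - fu)‖ = ‖(v - u) - (w - u)‖ := by
    rw [hD, hD', ← dist_eq_norm, ← dist_eq_norm]; exact hvw
  have hiVW : ⟪fv - fu, fw - fu⟫ = ⟪v - u, w - u⟫ := by
    have A := norm_sub_sq_real (fv - fu) (fw - fu)
    have B := norm_sub_sq_real (v - u) (w - u)
    rw [hVn, hWn, hVWn] at A
    linarith
  -- the main pinning step, for any valid barycentric representation
  have main : ∀ a b : ℝ, 0 ≤ a → 0 ≤ b → a + b ≤ 1 →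
      x = u + a • (v - u) + b • (w - u) →
      q = fu + a • (fv - fu) + b • (fw - fu) := by
    intro a b ha hb hab hrep
    have hx1 : x - u = a • (v - u) + b • (w - u) := by rw [hrep]; abel
    have hx2 : x - v = (a - 1) • (v - u) + b • (w - u) := by
      rw [hrep, sub_smul, one_smul]; abel
    have hx3 : x - w = a • (v - u) + (b - 1) • (w - u) := by
      rw [hrep, sub_smul, one_smul]; abel
    have n1 : ‖x - u‖^2 = a^2*‖v-u‖^2 + 2*a*b*⟪v-u, w-u⟫ + b^2*‖w-u‖^2 := by
      rw [hx1, norm_comb_sq]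
    have n2 : ‖x - v‖^2 = (a-1)^2*‖v-u‖^2 + 2*(a-1)*b*⟪v-u, w-u⟫ + b^2*‖w-u‖^2 := by
      rw [hx2, norm_comb_sq]
    have n3 : ‖x - w‖^2 = a^2*‖v-u‖^2 + 2*a*(b-1)*⟪v-u, w-u⟫ + (b-1)^2*‖w-u‖^2 := by
      rw [hx3, norm_comb_sq]
    have g1 : ‖q - fu‖ ≤ ‖x - u‖ := by rw [← dist_eq_norm, ← dist_eq_norm]; exact hqu
    have g2 : ‖(q - fu) - (fv - fu)‖ ≤ ‖x - v‖ := by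
      have : (q - fu) - (fv - fu) = q - fv := by abel
      rw [this, ← dist_eq_norm, ← dist_eq_norm]; exact hqv
    have g3 : ‖(q - fu) - (fw - fu)‖ ≤ ‖x - w‖ := by
      have : (q - fu) - (fw - fu) = q - fw := by abel
      rw [this, ← dist_eq_norm, ← dist_eq_norm]; exact hqw
    have hc := core_pin (fv - fu) (fw - fu) (q - fu) a b (‖v-u‖^2) (‖w-u‖^2)
      (⟪v-u, w-u⟫) ha hb hab (by rw [hVn]) (by rw [hWn]) hiVW
      (by rw [← n1]; exact pow_le_pow_left₀ (norm_nonneg _) g1 2)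
      (by rw [← n2]; exact pow_le_pow_left₀ (norm_nonneg _) g2 2)
      (by rw [← n3]; exact pow_le_pow_left₀ (norm_nonneg _) g3 2)
    have : q = fu + (a • (fv - fu) + b • (fw - fu)) := by
      rw [← hc]; abel
    rw [this]; abel
  -- extract a representation of x from the convex hull
  obtain ⟨a, b, ha, hb, hab, hrep⟩ :
      ∃ a b : ℝ, 0 ≤ a ∧ 0 ≤ b ∧ a + b ≤ 1 ∧ x = u + a • (v - u) + b • (w - u) := by
    rw [convexHull_insert ⟨v, by simp⟩, convexHull_pair] at hx
    rw [mem_convexJoin] at hx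
    obtain ⟨u', hu', y, hy, hxseg⟩ := hx
    rw [Set.mem_singleton_iff] at hu'
    subst hu'
    obtain ⟨s, t, hs, ht, hst, hy⟩ := hy
    obtain ⟨c, r, hc, hr, hcr, hxe⟩ := hxseg
    refine ⟨r * s, r * t, mul_nonneg hr hs, mul_nonneg hr ht, by nlinarith, ?_⟩
    rw [← hxe, ← hy]
    match_scalars <;> nlinarith [hst, hcr]
  have hq := main a b ha hb hab hrep
  have hx1 : x - u = a • (v - u) + b • (w - u) := by rw [hrep]; abel
  have hq1 : q - fu = a • (fv - fu) + b • (fw - fu) := by rw [hq]; abel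
  have eqnorm : ∀ (a' b' : ℝ), ‖a' • (fv - fu) + b' • (fw - fu)‖ = ‖a' • (v - u) + b' • (w - u)‖ := by
    intro a' b'
    have e1 := norm_comb_sq (fv - fu) (fw - fu) a' b'
    have e2 := norm_comb_sq (v - u) (w - u) a' b'
    rw [hVn, hWn, hiVW] at e1
    have : ‖a' • (fv - fu) + b' • (fw - fu)‖^2 = ‖a' • (v - u) + b' • (w - u)‖^2 := by
      rw [e1, e2]
    have := (sq_eq_sq_iff_abs_eq_abs _ _).mp this
    rwa [abs_of_nonneg (norm_nonneg _), abs_of_nonneg (norm_nonneg _)] at this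
  have hx2 : x - v = (a - 1) • (v - u) + b • (w - u) := by
    rw [hrep, sub_smul, one_smul]; abel
  have hx3 : x - w = a • (v - u) + (b - 1) • (w - u) := by
    rw [hrep, sub_smul, one_smul]; abel
  have hq2 : q - fv = (a - 1) • (fv - fu) + b • (fw - fu) := by
    rw [hq, sub_smul, one_smul]; abel
  have hq3 : q - fw = a • (fv - fu) + (b - 1) • (fw - fu) := by
    rw [hq, sub_smul, one_smul]; abel
  refine ⟨?_, ?_, ?_, main⟩
  · rw [dist_eq_norm, dist_eq_norm, hq1, eqnorm, ← hx1]
  · rw [dist_eq_norm, dist_eq_norm, hq2, eqnorm, ← hx2]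
  · rw [dist_eq_norm, dist_eq_norm, hq3, eqnorm, ← hx3]
end

section
/- Let P be a convex polygon with valid boundary mapping f : ∂P → R^d such that every pair of vertices is critical under f. Then the unique map g : P → R^d extending f affinely is an isometry of P onto a congruent polygon: ‖g(p)−g(q)‖ = ‖p−q‖ for all p, q ∈ P, and g agrees with f on ∂P when f maps edges affinely-isometrically. -/
/-!
By polarization, preserving all vertex distances means preserving the Gram matrix of the
vectors `V i - V 0`. These span the plane because the vertices are not collinear, so
`∑ cᵢ (V i - V 0) ↦ ∑ cᵢ (f (V i) - f (V 0))` is a well-defined linear isometry, and a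
translation turns it into an affine isometry `g` through the vertex images. An affine map is
determined by its values on a set with full affine span, which gives uniqueness, and it
commutes with `lineMap`, which together with the edge hypothesis gives `g = f` on the boundary.
-/

open Set
open scoped RealInnerProductSpace

theorem affineSpan_eq_top_of_not_collinear {k V P : Type*} [DivisionRing k] [AddCommGroup V]
    [Module k V] [AddTorsor V P] [FiniteDimensional k V] (hV : Module.finrank k V = 2)
    {s : Set P} (hs : ¬Collinear k s) : affineSpan k s = ⊤ := by
  have hne : s.Nonempty := nonempty_iff_ne_empty.2 (by rintro rfl; exact hs (collinear_empty k P))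
  rw [AffineSubspace.affineSpan_eq_top_iff_vectorSpan_eq_top_of_nonempty k V P hne]
  rw [collinear_iff_finrank_le_one, not_le] at hs
  exact Submodule.eq_top_of_finrank_eq <| le_antisymm (Submodule.finrank_le _) (by omega)

section Euclidean

variable {ι V P W Q : Type*} [NormedAddCommGroup V] [InnerProductSpace ℝ V] [MetricSpace P]
  [NormedAddTorsor V P] [NormedAddCommGroup W] [InnerProductSpace ℝ W] [MetricSpace Q]
  [NormedAddTorsor W Q]

theorem inner_vsub_vsub_eq_of_dist_eq {v : ι → P} {f : ι → Q}
    (hf : ∀ i j, dist (f i) (f j) = dist (v i) (v j)) (i j k : ι) :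
    ⟪f i -ᵥ f k, f j -ᵥ f k⟫ = ⟪v i -ᵥ v k, v j -ᵥ v k⟫ := by
  simp only [real_inner_eq_norm_mul_self_add_norm_mul_self_sub_norm_sub_mul_self_div_two,
    vsub_sub_vsub_cancel_right, ← dist_eq_norm_vsub, hf]

theorem LinearIsometry.exists_map_eq_of_inner_eq {w : ι → V} {u : ι → W}
    (hw : Submodule.span ℝ (range w) = ⊤) (hu : ∀ i j, ⟪u i, u j⟫ = ⟪w i, w j⟫) :
    ∃ L : V →ₗᵢ[ℝ] W, ∀ i, L (w i) = u i := by
  set A := Finsupp.linearCombination ℝ w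
  set B := Finsupp.linearCombination ℝ u
  have hforms : (innerₛₗ ℝ).compl₁₂ B B = (innerₛₗ ℝ).compl₁₂ A A := by
    ext i j
    simp only [LinearMap.coe_comp, Function.comp_apply, Finsupp.lsingle_apply,
      LinearMap.compl₁₂_apply, Finsupp.linearCombination_single, one_smul, A, B]
    exact hu i j
  have hgram (c c' : ι →₀ ℝ) : ⟪B c, B c'⟫ = ⟪A c, A c'⟫ := congrArg (· c c') hforms
  have hA : Function.Surjective A := by
    rw [← LinearMap.range_eq_top, Finsupp.range_linearCombination, hw]
  -- Equal Gram matrices give `‖B c‖ = ‖A c‖`, so `B` factors through the surjection `A`.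
  have hker : LinearMap.ker A ≤ LinearMap.ker B := fun c hc => by
    rw [LinearMap.mem_ker] at hc ⊢
    rw [← inner_self_eq_zero (𝕜 := ℝ), hgram, hc, inner_zero_left]
  set L := (LinearMap.ker A).liftQ B hker ∘ₗ (A.quotKerEquivOfSurjective hA).symm.toLinearMap
  have hL (c : ι →₀ ℝ) : L (A c) = B c := by simp [L]
  refine ⟨L.isometryOfInner fun x y => ?_, fun i => by simpa [A, B] using hL (.single i 1)⟩
  obtain ⟨c, rfl⟩ := hA x
  obtain ⟨c', rfl⟩ := hA y
  rw [hL, hL, hgram]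

theorem AffineIsometry.exists_map_eq_of_dist_eq {v : ι → P} {f : ι → Q}
    (hv : affineSpan ℝ (range v) = ⊤) (hf : ∀ i j, dist (f i) (f j) = dist (v i) (v j)) :
    ∃ g : P →ᵃⁱ[ℝ] Q, ∀ i, g (v i) = f i := by
  obtain ⟨_, k, rfl⟩ := AffineSubspace.nonempty_of_affineSpan_eq_top ℝ V P hv
  have hspan : Submodule.span ℝ (range fun i => v i -ᵥ v k) = ⊤ := by
    rw [range_comp' (· -ᵥ v k) v, ← vectorSpan_eq_span_vsub_set_right ℝ (mem_range_self k),
      AffineSubspace.vectorSpan_eq_top_of_affineSpan_eq_top ℝ V P hv]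
  obtain ⟨L, hL⟩ := LinearIsometry.exists_map_eq_of_inner_eq hspan
    (inner_vsub_vsub_eq_of_dist_eq hf · · k)
  refine ⟨(AffineIsometryEquiv.vaddConst ℝ (f k)).toAffineIsometry.comp
    (L.toAffineIsometry.comp (AffineIsometryEquiv.vaddConst ℝ (v k)).symm.toAffineIsometry),
    fun i => ?_⟩
  simp [hL]

end Euclidean

theorem convex_polygon_rigid_general {d n : ℕ}
    (V : ZMod n → EuclideanSpace ℝ (Fin 2))
    (hncol : ¬ Collinear ℝ (Set.range V))
    (f : EuclideanSpace ℝ (Fin 2) → EuclideanSpace ℝ (Fin d))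
    -- all vertex pairs are critical under f
    (hcrit : ∀ i j : ZMod n, dist (f (V i)) (f (V j)) = dist (V i) (V j))
    -- f maps each edge affinely-isometrically onto the segment between vertex images
    (haff : ∀ i : ZMod n, ∀ t ∈ Set.Icc (0 : ℝ) 1,
        f (V i + t • (V (i + 1) - V i)) = f (V i) + t • (f (V (i + 1)) - f (V i))) :
    ∃ g : EuclideanSpace ℝ (Fin 2) →ᵃ[ℝ] EuclideanSpace ℝ (Fin d),
      (∀ i : ZMod n, g (V i) = f (V i)) ∧
      (∀ x ∈ ⋃ i : ZMod n, segment ℝ (V i) (V (i + 1)), g x = f x) ∧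
      (∀ p ∈ convexHull ℝ (Set.range V), ∀ q ∈ convexHull ℝ (Set.range V),
          dist (g p) (g q) = dist p q) ∧
      ∀ g' : EuclideanSpace ℝ (Fin 2) →ᵃ[ℝ] EuclideanSpace ℝ (Fin d),
        (∀ i : ZMod n, g' (V i) = f (V i)) →
        ∀ p ∈ convexHull ℝ (Set.range V), g' p = g p := by
  have hspan : affineSpan ℝ (range V) = ⊤ :=
    affineSpan_eq_top_of_not_collinear finrank_euclideanSpace_fin hncol
  obtain ⟨g, hgV⟩ := AffineIsometry.exists_map_eq_of_dist_eq (f := fun i => f (V i)) hspan hcrit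
  refine ⟨g.toAffineMap, hgV, ?_, fun p _ q _ => g.dist_map p q, fun g' hg'V p _ => ?_⟩
  · simp only [mem_iUnion, segment_eq_image_lineMap]
    rintro _ ⟨i, t, ht, rfl⟩
    rw [AffineMap.apply_lineMap, AffineIsometry.coe_toAffineMap, hgV, hgV,
      AffineMap.lineMap_apply_module', AffineMap.lineMap_apply_module', add_comm,
      add_comm _ (V i), haff i t ht]
  · have hg' : g' = g.toAffineMap :=
      AffineMap.ext_on hspan (by rintro _ ⟨i, rfl⟩; exact (hg'V i).trans (hgV i).symm)
    rw [hg']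

/-- if every pair of vertices of a convex polygon is critical under a
valid boundary mapping f that maps edges affinely-isometrically, then the unique affine
extension g of f on the vertices is an isometry of the polygon P = convexHull(V) onto a
congruent polygon, and g agrees with f on the boundary. -/
theorem convex_polygon_rigid {d n : ℕ} (hn : 3 ≤ n)
    (V : ZMod n → EuclideanSpace ℝ (Fin 2)) (hinj : Function.Injective V)
    (hncol : ¬ Collinear ℝ (Set.range V))
    (f : EuclideanSpace ℝ (Fin 2) → EuclideanSpace ℝ (Fin d))
    -- all vertex pairs are critical under f
    (hcrit : ∀ i j : ZMod n, dist (f (V i)) (f (V j)) = dist (V i) (V j))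
    -- f maps each edge affinely-isometrically onto the segment between vertex images
    (haff : ∀ i : ZMod n, ∀ t ∈ Set.Icc (0 : ℝ) 1,
        f (V i + t • (V (i + 1) - V i)) = f (V i) + t • (f (V (i + 1)) - f (V i))) :
    ∃ g : EuclideanSpace ℝ (Fin 2) →ᵃ[ℝ] EuclideanSpace ℝ (Fin d),
      (∀ i : ZMod n, g (V i) = f (V i)) ∧
      (∀ x ∈ ⋃ i : ZMod n, segment ℝ (V i) (V (i + 1)), g x = f x) ∧
      (∀ p ∈ convexHull ℝ (Set.range V), ∀ q ∈ convexHull ℝ (Set.range V),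
          dist (g p) (g q) = dist p q) ∧
      ∀ g' : EuclideanSpace ℝ (Fin 2) →ᵃ[ℝ] EuclideanSpace ℝ (Fin d),
        (∀ i : ZMod n, g' (V i) = f (V i)) →
        ∀ p ∈ convexHull ℝ (Set.range V), g' p = g p :=
  convex_polygon_rigid_general V hncol f hcrit haff
end
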